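/- arXiv:1511.08981 — 7 statements merged into one kernel-verified Lean document; each statement's English description precedes it below -/
import Mathlib

section
/- Let X be a topological space and Y a metrizable space. Every pointwise limit of a sequence of continuous mappings f : X → Y admits a base consisting of functionally closed (zero) sets which is a countable union of strongly functionally discrete families. -/
def DiscreteSetFamily {X : Type*} [TopologicalSpace X] (𝓑 : Set (Set X)) : Prop :=
  ∀ x : X, ∃ U : Set X, IsOpen U ∧ x ∈ U ∧
    ∀ A ∈ 𝓑, ∀ B ∈ 𝓑, (U ∩ A).Nonempty → (U ∩ B).Nonempty → A = B

/-- A set is functionally closed (a zero set) if it is `g ⁻¹' {0}` for some continuous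
`g : X → [0,1]`. -/
def FunctionallyClosed {X : Type*} [TopologicalSpace X] (F : Set X) : Prop :=
  ∃ g : X → ℝ, Continuous g ∧ (∀ x, g x ∈ Set.Icc (0:ℝ) 1) ∧ F = g ⁻¹' {0}

/-- A set is functionally open (cozero) if its complement is functionally closed. -/
def FunctionallyOpen {X : Type*} [TopologicalSpace X] (U : Set X) : Prop :=
  FunctionallyClosed Uᶜ

/-- A set-family is strongly functionally discrete if each member's closure can be enclosed in
a member of a discrete family of functionally open sets. -/
def SFDSetFamily {X : Type*} [TopologicalSpace X] (𝓐 : Set (Set X)) : Prop :=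
  ∃ U : Set X → Set X, (∀ A ∈ 𝓐, FunctionallyOpen (U A) ∧ closure A ⊆ U A) ∧
    ∀ x : X, ∃ V : Set X, IsOpen V ∧ x ∈ V ∧
      ∀ A ∈ 𝓐, ∀ B ∈ 𝓐, (V ∩ U A).Nonempty → (V ∩ U B).Nonempty → A = B

def IsBaseForMapping {X Y : Type*} [TopologicalSpace X] [TopologicalSpace Y]
    (f : X → Y) (𝓑 : Set (Set X)) : Prop :=
  ∀ V : Set Y, IsOpen V → ∃ 𝓢 ⊆ 𝓑, f ⁻¹' V = ⋃₀ 𝓢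

/-!
If `f x ∈ W` with `W ⊆ Y` open, then for some `r > 0` and `n` all the values `g m x`, `m ≥ n`,
lie `r`-deep inside `W`; conversely such tails force `f x ∈ W`. The sets `tailInside g W r n` of
such points are zero sets, being preimages of closed subsets of the metrizable space `ℕ → Y`
under `x ↦ (g m x)ₘ`. Letting `W` run through a σ-discrete base of `Y` (Stone) and `r = 1/(k+1)`,
`n` through `ℕ` gives the base; for fixed `r`, `n` and a discrete family of `W`s the sets
`tailInside g W r n ⊆ g n ⁻¹' W` are strongly functionally discrete, witnessed by the discrete
family of cozero sets `g n ⁻¹' W`.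
-/

open Set Metric Filter Topology TopologicalSpace

section FunctionallyClosed

variable {X Z : Type*} [TopologicalSpace X] [TopologicalSpace Z]

lemma FunctionallyClosed.isClosed {F : Set X} (hF : FunctionallyClosed F) : IsClosed F := by
  obtain ⟨g, hg, -, rfl⟩ := hF
  exact isClosed_singleton.preimage hg

lemma IsClosed.functionallyClosed [PerfectlyNormalSpace Z] {F : Set Z} (hF : IsClosed F) :
    FunctionallyClosed F := by
  obtain ⟨g, rfl, hg⟩ := perfectlyNormalSpace_iff_forall_isClosed_preimage_zero.1 ‹_› F hF
  exact ⟨g, g.continuous, hg, rfl⟩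

lemma IsOpen.functionallyOpen [PerfectlyNormalSpace Z] {U : Set Z} (hU : IsOpen U) :
    FunctionallyOpen U :=
  hU.isClosed_compl.functionallyClosed

lemma FunctionallyClosed.preimage {F : Set Z} (hF : FunctionallyClosed F) {φ : X → Z}
    (hφ : Continuous φ) : FunctionallyClosed (φ ⁻¹' F) := by
  obtain ⟨g, hg, hg01, rfl⟩ := hF
  exact ⟨g ∘ φ, hg.comp hφ, fun x => hg01 (φ x), rfl⟩

lemma FunctionallyOpen.preimage {U : Set Z} (hU : FunctionallyOpen U) {φ : X → Z}
    (hφ : Continuous φ) : FunctionallyOpen (φ ⁻¹' U) :=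
  FunctionallyClosed.preimage hU hφ

end FunctionallyClosed

section DiscreteFamilies

variable {X Y : Type*} [TopologicalSpace X] [TopologicalSpace Y]

lemma DiscreteSetFamily.preimage {𝓦 : Set (Set Y)} (h𝓦 : DiscreteSetFamily 𝓦) {φ : X → Y}
    (hφ : Continuous φ) (x : X) :
    ∃ V : Set X, IsOpen V ∧ x ∈ V ∧ ∀ W ∈ 𝓦, ∀ W' ∈ 𝓦,
      (V ∩ φ ⁻¹' W).Nonempty → (V ∩ φ ⁻¹' W').Nonempty → W = W' := by
  obtain ⟨O, hO, hxO, hdisc⟩ := h𝓦 (φ x)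
  refine ⟨φ ⁻¹' O, hO.preimage hφ, hxO, fun W hW W' hW' hne hne' => hdisc W hW W' hW' ?_ ?_⟩
  · exact nonempty_of_nonempty_preimage hne
  · exact nonempty_of_nonempty_preimage hne'

lemma sfdSetFamily_image {ι : Type*} {s : Set ι} {A U : ι → Set X}
    (hU : ∀ i ∈ s, FunctionallyOpen (U i)) (hAU : ∀ i ∈ s, closure (A i) ⊆ U i)
    (hdisc : ∀ x, ∃ V : Set X, IsOpen V ∧ x ∈ V ∧ ∀ i ∈ s, ∀ j ∈ s,
      (V ∩ U i).Nonempty → (V ∩ U j).Nonempty → i = j) :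
    SFDSetFamily (A '' s) := by
  classical
  let U' : Set X → Set X := fun B => if hB : B ∈ A '' s then U hB.choose else ∅
  have hU' : ∀ B (hB : B ∈ A '' s), U' B = U hB.choose := fun B hB => dif_pos hB
  refine ⟨U', fun B hB => ?_, fun x => ?_⟩
  · obtain ⟨hmem, hA⟩ := hB.choose_spec
    rw [hU' B hB]
    exact ⟨hU _ hmem, (closure_mono hA.symm.subset).trans (hAU _ hmem)⟩
  · obtain ⟨V, hV, hxV, hVdisc⟩ := hdisc x
    refine ⟨V, hV, hxV, fun B hB B' hB' hne hne' => ?_⟩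
    rw [hU' B hB] at hne
    rw [hU' B' hB'] at hne'
    rw [← hB.choose_spec.2, ← hB'.choose_spec.2,
      hVdisc _ hB.choose_spec.1 _ hB'.choose_spec.1 hne hne']

end DiscreteFamilies

section SigmaDiscreteBasis

variable {Y : Type*} [PseudoMetricSpace Y]

theorem exists_uniformly_discrete_refinement {ι : Type*} (s : ι → Set Y)
    (hs : ∀ i, IsOpen (s i)) (hcov : ∀ y, ∃ i, y ∈ s i) :
    ∃ D : ℕ → ι → Set Y, (∀ n i, IsOpen (D n i)) ∧ (∀ n i, D n i ⊆ s i) ∧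
      (∀ y, ∃ n i, y ∈ D n i) ∧
      ∀ n i j, ∀ x ∈ D n i, ∀ y ∈ D n j, dist x y < 1 / (n + 1) → i = j := by
  obtain ⟨_, _⟩ := exists_wellFoundedLT ι
  let ind : Y → ι := fun y => wellFounded_lt.min {i | y ∈ s i} (hcov y)
  have mem_ind : ∀ y, y ∈ s (ind y) := fun y => wellFounded_lt.min_mem _ (hcov y)
  have not_mem_of_lt_ind : ∀ {y i}, i < ind y → y ∉ s i := fun {y i} hlt hy =>
    wellFounded_lt.not_lt_min {i | y ∈ s i} hy hlt
  -- Stone's construction, without the recursion that only serves local finiteness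
  let D : ℕ → ι → Set Y := fun n i =>
    ⋃ x ∈ {x | ind x = i ∧ ball x (3 * (1 / (n + 1))) ⊆ s i}, ball x (1 / (n + 1))
  have mem_D : ∀ {n i y}, y ∈ D n i ↔
      ∃ x, (ind x = i ∧ ball x (3 * (1 / (n + 1))) ⊆ s i) ∧ y ∈ ball x (1 / (n + 1)) := by
    intro n i y
    simp only [D, mem_iUnion₂, exists_prop, mem_ofPred_eq]
  refine ⟨D, fun n i => isOpen_biUnion fun _ _ => isOpen_ball, fun n i y hy => ?_,
    fun y => ?_, fun n i j x hx y hy hxy => ?_⟩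
  · obtain ⟨x, ⟨-, hsub⟩, hyx⟩ := mem_D.1 hy
    exact hsub (ball_subset_ball (by linarith [Nat.one_div_pos_of_nat (n := n) (α := ℝ)]) hyx)
  · obtain ⟨ε, hε, hball⟩ := isOpen_iff.1 (hs (ind y)) y (mem_ind y)
    obtain ⟨n, hn⟩ := exists_nat_one_div_lt (div_pos hε three_pos)
    refine ⟨n, ind y, mem_D.2 ⟨y, ⟨rfl, (ball_subset_ball ?_).trans hball⟩, ?_⟩⟩
    · linarith
    · exact mem_ball_self Nat.one_div_pos_of_nat
  · obtain ⟨p, ⟨rfl, hp⟩, hxp⟩ := mem_D.1 hx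
    obtain ⟨q, ⟨rfl, hq⟩, hyq⟩ := mem_D.1 hy
    -- the centres are `3ρ`-close, so the one of larger index lies in the other's cover member
    have hpq : dist p q < 3 * (1 / (n + 1)) := by
      rw [mem_ball] at hxp hyq
      linarith [dist_triangle4 p x y q, dist_comm p x]
    rcases lt_trichotomy (ind p) (ind q) with h | h | h
    · exact absurd (hp (mem_ball_comm.1 hpq)) (not_mem_of_lt_ind h)
    · exact h
    · exact absurd (hq (mem_ball.2 hpq)) (not_mem_of_lt_ind h)

theorem discreteSetFamily_range_of_dist_lt {ι : Type*} {D : ι → Set Y} {ε : ℝ} (hε : 0 < ε)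
    (hD : ∀ i j, ∀ x ∈ D i, ∀ y ∈ D j, dist x y < ε → i = j) :
    DiscreteSetFamily (range D) := by
  refine fun z => ⟨ball z (ε / 2), isOpen_ball, mem_ball_self (half_pos hε), ?_⟩
  rintro _ ⟨i, rfl⟩ _ ⟨j, rfl⟩ ⟨x, hxz, hx⟩ ⟨y, hyz, hy⟩
  rw [mem_ball] at hxz hyz
  rw [hD i j x hx y hy (by linarith [dist_triangle_right x y z])]

variable (Y) in
theorem exists_sigma_discrete_basis :
    ∃ 𝓦 : ℕ → Set (Set Y), (∀ n, DiscreteSetFamily (𝓦 n)) ∧ IsTopologicalBasis (⋃ n, 𝓦 n) := by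
  choose D hDopen hDball hDcov hDsep using fun k : ℕ =>
    exists_uniformly_discrete_refinement (fun y : Y => ball y (1 / (k + 1)))
      (fun _ => isOpen_ball) (fun y => ⟨y, mem_ball_self Nat.one_div_pos_of_nat⟩)
  let 𝓦 : ℕ → Set (Set Y) := fun N => range (D N.unpair.1 N.unpair.2)
  have h𝓦 : ⋃ N, 𝓦 N = ⋃ kn : ℕ × ℕ, range (D kn.1 kn.2) :=
    Nat.surjective_unpair.iUnion_comp fun kn => range (D kn.1 kn.2)
  refine ⟨𝓦, fun N => discreteSetFamily_range_of_dist_lt Nat.one_div_pos_of_nat (hDsep _ _),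
    isTopologicalBasis_of_isOpen_of_nhds ?_ fun y V hyV hV => ?_⟩
  · rw [h𝓦]
    rintro _ ⟨_, ⟨⟨k, n⟩, rfl⟩, ⟨i, rfl⟩⟩
    exact hDopen k n i
  · obtain ⟨ε, hε, hball⟩ := isOpen_iff.1 hV y hyV
    obtain ⟨k, hk⟩ := exists_nat_one_div_lt (half_pos hε)
    obtain ⟨n, i, hy⟩ := hDcov k y
    refine ⟨D k n i, h𝓦 ▸ mem_iUnion.2 ⟨(k, n), i, rfl⟩, hy, fun z hz => hball ?_⟩
    have hzi := mem_ball.1 (hDball k n i hz)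
    have hyi := mem_ball.1 (hDball k n i hy)
    rw [mem_ball]
    linarith [dist_triangle_right z y i]

end SigmaDiscreteBasis

lemma TopologicalSpace.IsTopologicalBasis.isBaseForMapping {X Y : Type*} [TopologicalSpace X]
    [TopologicalSpace Y] {𝓦 : Set (Set Y)} (h𝓦 : IsTopologicalBasis 𝓦) {f : X → Y}
    {𝓑 : Set (Set X)} (hf : ∀ W ∈ 𝓦, ∀ x, f x ∈ W → ∃ B ∈ 𝓑, x ∈ B ∧ B ⊆ f ⁻¹' W) :
    IsBaseForMapping f 𝓑 := by
  refine fun V hV => ⟨{B ∈ 𝓑 | B ⊆ f ⁻¹' V}, sep_subset _ _,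
    Subset.antisymm (fun x hx => ?_) (sUnion_subset fun B hB => hB.2)⟩
  obtain ⟨W, hW, hxW, hWV⟩ := h𝓦.exists_subset_of_mem_open hx hV
  obtain ⟨B, hB, hxB, hBW⟩ := hf W hW x hxW
  exact ⟨B, ⟨hB, hBW.trans (preimage_mono hWV)⟩, hxB⟩

lemma isClosed_setOf_ball_subset {Y : Type*} [PseudoMetricSpace Y] (W : Set Y) (r : ℝ) :
    IsClosed {y | ball y r ⊆ W} := by
  convert (isOpen_thickening (δ := r) (E := Wᶜ)).isClosed_compl using 1
  ext y
  simp only [mem_ofPred_eq, mem_compl_iff, mem_thickening_iff, not_exists, not_and, not_lt]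
  exact ⟨fun h z hz => not_lt.1 fun hlt => hz (h (mem_ball'.2 hlt)),
    fun h z hz => by_contra fun hzW => (h z hzW).not_gt (mem_ball'.1 hz)⟩

section Tails

variable {X Y : Type*} [PseudoMetricSpace Y] (g : ℕ → X → Y)

def tailInside (W : Set Y) (r : ℝ) (n : ℕ) : Set X :=
  ⋂ m ≥ n, g m ⁻¹' {y | ball y r ⊆ W}

variable {g}

lemma tailInside_subset_preimage_self {W : Set Y} {r : ℝ} (hr : 0 < r) (n : ℕ) :
    tailInside g W r n ⊆ g n ⁻¹' W :=
  fun _ hx => mem_iInter₂.1 hx n le_rfl (mem_ball_self hr)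

lemma tailInside_subset_preimage {f : X → Y}
    (hlim : ∀ x, Tendsto (fun n => g n x) atTop (𝓝 (f x))) {W : Set Y} {r : ℝ} (hr : 0 < r)
    (n : ℕ) : tailInside g W r n ⊆ f ⁻¹' W := fun x hx =>
  (isClosed_setOf_ball_subset W r).mem_of_tendsto (hlim x)
    (eventually_atTop.2 ⟨n, fun m hm => mem_iInter₂.1 hx m hm⟩) (mem_ball_self hr)

lemma exists_mem_tailInside {f : X → Y}
    (hlim : ∀ x, Tendsto (fun n => g n x) atTop (𝓝 (f x))) {W : Set Y} (hW : IsOpen W) {x : X} (hx : f x ∈ W) :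
    ∃ k n : ℕ, x ∈ tailInside g W (1 / (k + 1)) n := by
  obtain ⟨ε, hε, hball⟩ := isOpen_iff.1 hW (f x) hx
  obtain ⟨k, hk⟩ := exists_nat_one_div_lt (half_pos hε)
  obtain ⟨n, hn⟩ := Metric.tendsto_atTop.1 (hlim x) _ (Nat.one_div_pos_of_nat (n := k))
  refine ⟨k, n, mem_iInter₂.2 fun m hm => ?_⟩
  exact (ball_subset_ball' (by linarith [hn m hm])).trans hball

lemma functionallyClosed_tailInside [TopologicalSpace X] (hg : ∀ n, Continuous (g n))
    (W : Set Y) (r : ℝ) (n : ℕ) : FunctionallyClosed (tailInside g W r n) := by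
  have : tailInside g W r n =
      (fun x m => g m x) ⁻¹' {m | n ≤ m}.pi fun _ => {y | ball y r ⊆ W} := by
    ext x
    simp [tailInside]
  rw [this]
  exact (isClosed_set_pi fun _ _ => isClosed_setOf_ball_subset W r).functionallyClosed.preimage
    (continuous_pi hg)

lemma sfdSetFamily_image_tailInside [TopologicalSpace X] (hg : ∀ n, Continuous (g n))
    {𝓦 : Set (Set Y)} (h𝓦 : DiscreteSetFamily 𝓦) (h𝓦open : ∀ W ∈ 𝓦, IsOpen W) {r : ℝ}
    (hr : 0 < r) (n : ℕ) : SFDSetFamily ((fun W => tailInside g W r n) '' 𝓦) :=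
  sfdSetFamily_image (U := fun W => g n ⁻¹' W)
    (fun W hW => (h𝓦open W hW).functionallyOpen.preimage (hg n))
    (fun W _ => (functionallyClosed_tailInside hg W r n).isClosed.closure_subset.trans
      (tailInside_subset_preimage_self hr n))
    (h𝓦.preimage (hg n))

end Tails

/-- Every pointwise limit of continuous maps into a metrizable space admits a base of
functionally closed sets which is a countable union of strongly functionally discrete
families. -/
theorem baireOne_has_sigma_sfd_zero_base {X Y : Type*} [TopologicalSpace X] [TopologicalSpace Y]
    [TopologicalSpace.MetrizableSpace Y] (f : X → Y) (g : ℕ → X → Y)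
    (hg : ∀ n, Continuous (g n)) (hlim : ∀ x, Filter.Tendsto (fun n => g n x) Filter.atTop (nhds (f x))) :
    ∃ 𝓑 : ℕ → Set (Set X), (∀ n, SFDSetFamily (𝓑 n)) ∧
      (∀ n, ∀ B ∈ 𝓑 n, FunctionallyClosed B) ∧
      IsBaseForMapping f (⋃ n, 𝓑 n) := by
  let := pseudoMetrizableSpacePseudoMetric Y
  obtain ⟨𝓦, h𝓦disc, h𝓦basis⟩ := exists_sigma_discrete_basis Y
  let 𝓐 : ℕ × ℕ × ℕ → Set (Set X) := fun bkn =>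
    (fun W => tailInside g W (1 / (bkn.2.1 + 1)) bkn.2.2) '' 𝓦 bkn.1
  obtain ⟨e, he⟩ := exists_surjective_nat (ℕ × ℕ × ℕ)
  refine ⟨fun i => 𝓐 (e i), fun i => ?_, ?_, ?_⟩
  · exact sfdSetFamily_image_tailInside hg (h𝓦disc _)
      (fun W hW => h𝓦basis.isOpen (mem_iUnion_of_mem _ hW)) Nat.one_div_pos_of_nat _
  · rintro i _ ⟨W, -, rfl⟩
    exact functionallyClosed_tailInside hg _ _ _
  · rw [he.iUnion_comp 𝓐]
    refine h𝓦basis.isBaseForMapping fun W hW x hx => ?_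
    obtain ⟨b, hWb⟩ := mem_iUnion.1 hW
    obtain ⟨k, n, hxA⟩ := exists_mem_tailInside hlim (h𝓦basis.isOpen hW) hx
    exact ⟨_, mem_iUnion.2 ⟨(b, k, n), W, hWb, rfl⟩, hxA,
      tailInside_subset_preimage hlim Nat.one_div_pos_of_nat n⟩
end

section
/- In a normal topological space X, for any two disjoint F_σ subsets A and B there exists a functionally G_δ set C with A ⊆ C and C ∩ B = ∅. -/
def Cozero {X : Type*} [TopologicalSpace X] (U : Set X) : Prop :=
  ∃ g : X → ℝ, Continuous g ∧ U = g ⁻¹' ({0}ᶜ)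

def FunctionallyGDelta {X : Type*} [TopologicalSpace X] (A : Set X) : Prop :=
  ∃ U : ℕ → Set X, (∀ n, Cozero (U n)) ∧ A = ⋂ n, U n

def IsFSigma {X : Type*} [TopologicalSpace X] (A : Set X) : Prop :=
  ∃ F : ℕ → Set X, (∀ n, IsClosed (F n)) ∧ A = ⋃ n, F n

/-!
Each closed piece `F n` of `A` is separated from each closed piece `G m` of `B` by a
cozero set given by Urysohn's lemma. Cozero sets are closed under countable unions
(glue the truncated functions `min |gₙ| 1` with weights `2⁻ⁿ`), so every `G m` is missed by a
cozero set `Uₘ ⊇ A`, and `C = ⋂ₘ Uₘ` works.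
-/

section

variable {X : Type*} [TopologicalSpace X]

theorem Cozero.iUnion {U : ℕ → Set X} (hU : ∀ n, Cozero (U n)) : Cozero (⋃ n, U n) := by
  choose g hg hgU using hU
  set term : ℕ → X → ℝ := fun n x => (2 : ℝ)⁻¹ ^ n * min |g n x| 1
  have term_nonneg : ∀ n x, 0 ≤ term n x := fun n x => by positivity
  have term_le : ∀ n x, ‖term n x‖ ≤ (2 : ℝ)⁻¹ ^ n := fun n x => by
    rw [Real.norm_of_nonneg (term_nonneg n x)]
    exact mul_le_of_le_one_right (by positivity) (min_le_right _ _)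
  have summable_geom : Summable fun n : ℕ => (2 : ℝ)⁻¹ ^ n :=
    summable_geometric_of_lt_one (by norm_num) (by norm_num)
  refine ⟨fun x => ∑' n, term n x,
    continuous_tsum (fun n => by fun_prop) summable_geom term_le, ?_⟩
  ext x
  have hsum : Summable fun n => term n x := summable_geom.of_norm_bounded (term_le · x)
  have term_eq_zero : ∀ n, term n x = 0 ↔ g n x = 0 := fun n => by
    rw [mul_eq_zero_iff_left (by positivity), min_eq_iff]
    constructor
    · rintro (⟨h, -⟩ | ⟨h, -⟩) <;> simp_all
    · intro h
      simp [h]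
  simp only [Set.mem_iUnion, hgU, Set.mem_preimage, Set.mem_compl_singleton_iff, ne_eq,
    hsum.hasSum_iff.symm, hasSum_zero_iff_of_nonneg (term_nonneg · x), funext_iff,
    Pi.zero_apply, term_eq_zero, not_forall]

theorem exists_cozero_superset_disjoint [NormalSpace X] {F G : Set X} (hF : IsClosed F)
    (hG : IsClosed G) (hFG : Disjoint F G) : ∃ U, Cozero U ∧ F ⊆ U ∧ Disjoint U G := by
  obtain ⟨f, hfG, hfF, -⟩ := exists_continuous_zero_one_of_isClosed hG hF hFG.symm
  refine ⟨f ⁻¹' {0}ᶜ, ⟨f, f.continuous, rfl⟩, fun x hx => ?_, ?_⟩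
  · simp [hfF hx]
  · exact Set.disjoint_left.2 fun x hx hxG => hx (hfG hxG)

theorem IsFSigma.exists_cozero_superset_disjoint [NormalSpace X] {A G : Set X}
    (hA : IsFSigma A) (hG : IsClosed G) (hAG : Disjoint A G) :
    ∃ U, Cozero U ∧ A ⊆ U ∧ Disjoint U G := by
  obtain ⟨F, hF, rfl⟩ := hA
  choose V hV hFV hVG using fun n =>
    _root_.exists_cozero_superset_disjoint (hF n) hG (Set.disjoint_iUnion_left.1 hAG n)
  exact ⟨⋃ n, V n, Cozero.iUnion hV, Set.iUnion_mono hFV, Set.disjoint_iUnion_left.2 hVG⟩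

end

/-- Veselý's lemma: in a normal space, any two disjoint `F_σ` sets `A` and `B` can be
separated by a functionally `G_δ` set `C` with `A ⊆ C` and `C ∩ B = ∅`. -/
theorem vesely_separation {X : Type*} [TopologicalSpace X] [NormalSpace X] {A B : Set X}
    (hA : IsFSigma A) (hB : IsFSigma B) (hAB : Disjoint A B) :
    ∃ C : Set X, FunctionallyGDelta C ∧ A ⊆ C ∧ C ∩ B = ∅ := by
  obtain ⟨G, hG, rfl⟩ := hB
  choose U hU hAU hUG using fun m =>
    hA.exists_cozero_superset_disjoint (hG m) (Set.disjoint_iUnion_right.1 hAB m)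
  refine ⟨⋂ m, U m, ⟨U, hU, rfl⟩, Set.subset_iInter hAU, ?_⟩
  rw [← Set.disjoint_iff_inter_eq_empty, Set.disjoint_iUnion_right]
  exact fun m => (hUG m).mono_left (Set.iInter_subset U m)
end

section
/- Let Y be a topological space such that every map f : [0,1] → Y with F_σ preimages of open sets is a pointwise limit of continuous maps. Then Y is almost arcwise connected: for every pair of nonempty open sets U, V ⊆ Y there is an arc (continuous map from [0,1] to Y) starting in U and ending in V. -/
open unitInterval

lemma isFSigma_compl_one : IsFSigma ({(1 : I)}ᶜ) := by
  refine ⟨fun n => {x : I | (x : ℝ) ≤ 1 - 1 / (n + 1)}, fun n => ?_, ?_⟩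
  · exact isClosed_le (by continuity) continuous_const
  · ext x
    simp only [Set.mem_compl_iff, Set.mem_singleton_iff, Set.mem_iUnion, Set.mem_setOf_eq]
    constructor
    · intro hx
      have hlt : (x : ℝ) < 1 := lt_of_le_of_ne x.2.2 (fun hc => hx (Subtype.ext hc))
      obtain ⟨n, hn⟩ := exists_nat_one_div_lt (show (0:ℝ) < 1 - x by linarith)
      exact ⟨n, by linarith⟩
    · rintro ⟨n, hn⟩ rfl
      have h1 : (0:ℝ) < 1 / (n + 1) := by positivity
      simp only [Set.Icc.coe_one] at hn
      linarith

/-- If every map `[0,1] → Y` with `F_σ` preimages of open sets is a pointwise limit of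
continuous maps, then `Y` is almost arcwise connected: any two nonempty open sets are joined
by an arc. -/
theorem almostArcwiseConnected_of_H1_subset_B1 {Y : Type*} [TopologicalSpace Y]
    (h : ∀ f : I → Y, (∀ V : Set Y, IsOpen V → IsFSigma (f ⁻¹' V)) →
      ∃ g : ℕ → I → Y, (∀ n, Continuous (g n)) ∧
        ∀ x : I, Filter.Tendsto (fun n => g n x) Filter.atTop (nhds (f x))) :
    ∀ U V : Set Y, IsOpen U → IsOpen V → U.Nonempty → V.Nonempty →
      ∃ γ : I → Y, Continuous γ ∧ γ 0 ∈ U ∧ γ 1 ∈ V := by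
  intro U V hU hV ⟨u, hu⟩ ⟨v, hv⟩
  set f : I → Y := fun x => if x = 1 then v else u with hf
  have h01 : (0 : I) ≠ 1 := fun hc => by
    have := congrArg (Subtype.val) hc; norm_num at this
  classical
  have hFσ : ∀ W : Set Y, IsOpen W → IsFSigma (f ⁻¹' W) := by
    intro W _
    have hpre : f ⁻¹' W =
        (if v ∈ W then {(1 : I)} else ∅) ∪ (if u ∈ W then {(1:I)}ᶜ else ∅) := by
      ext x
      by_cases hx : x = 1 <;> by_cases hvW : v ∈ W <;> by_cases huW : u ∈ W <;>
        simp [hf, hx, hvW, huW]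
    rw [hpre]
    obtain ⟨F, hFc, hFe⟩ := isFSigma_compl_one
    refine ⟨fun n => (if v ∈ W then {(1 : I)} else ∅) ∪ (if u ∈ W then F n else ∅),
      fun n => ?_, ?_⟩
    · refine IsClosed.union ?_ ?_ <;> split <;>
        first | exact isClosed_singleton | exact isClosed_empty | exact hFc _
    · rw [← Set.union_iUnion]
      congr 1
      split
      · rw [hFe]
      · simp
  obtain ⟨g, hgc, hgt⟩ := h f hFσ
  have h0 : Filter.Tendsto (fun n => g n 0) Filter.atTop (nhds u) := by
    have := hgt 0; simpa [hf, h01] using this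
  have h1 : Filter.Tendsto (fun n => g n 1) Filter.atTop (nhds v) := by
    have := hgt 1; simpa [hf] using this
  have hU' := h0.eventually (hU.mem_nhds hu)
  have hV' := h1.eventually (hV.mem_nhds hv)
  obtain ⟨n, hn0, hn1⟩ := (hU'.and hV').exists
  exact ⟨g n, hgc n, hn0, hn1⟩
end

section
/- Every regular locally almost arcwise connected topological space is locally connected. -/
open unitInterval

/-- `X` is locally almost arcwise connected: for every point `x` and every neighborhood `V`
of `x` there is a neighborhood `U ⊆ V` of `x` such that any two nonempty open subsets of `U`
can be joined by an arc lying in the closure of `V`. -/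
def LocallyAlmostArcwiseConnected (X : Type*) [TopologicalSpace X] : Prop :=
  ∀ x : X, ∀ V ∈ nhds x, ∃ U ∈ nhds x, U ⊆ V ∧
    ∀ W₁ W₂ : Set X, IsOpen W₁ → IsOpen W₂ → W₁.Nonempty → W₂.Nonempty → W₁ ⊆ U → W₂ ⊆ U →
      ∃ γ : I → X, Continuous γ ∧ γ 0 ∈ W₁ ∧ γ 1 ∈ W₂ ∧ Set.range γ ⊆ closure V

/-- Every regular locally almost arcwise connected space is locally connected. -/
theorem locallyConnected_of_regular_locallyAlmostArcwiseConnected (X : Type*)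
    [TopologicalSpace X] [RegularSpace X] (h : LocallyAlmostArcwiseConnected X) :
    LocallyConnectedSpace X := by
  rw [locallyConnectedSpace_iff_connected_subsets]
  intro x N hN
  obtain ⟨C, hC, hCc, hCN⟩ := exists_mem_nhds_isClosed_subset hN
  set V := interior C with hVdef
  have hVn : V ∈ nhds x := interior_mem_nhds.2 hC
  have hclV : closure V ⊆ N := (closure_minimal interior_subset hCc).trans hCN
  obtain ⟨U, hU, hUV, hprop⟩ := h x V hVn
  set U' := interior U with hU'def
  have hU'n : U' ∈ nhds x := interior_mem_nhds.2 hU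
  have hU'U : U' ⊆ U := interior_subset
  set K : Set X := U' ∪ {y | ∃ γ : I → X, Continuous γ ∧ (Set.range γ ∩ U').Nonempty ∧
    Set.range γ ⊆ closure V ∧ y ∈ Set.range γ} with hKdef
  have hU'K : U' ⊆ K := Set.subset_union_left
  have hKN : K ⊆ N := by
    rintro y (hy | ⟨γ, _, _, hγV, hyγ⟩)
    · exact hclV (subset_closure (hUV (hU'U hy)))
    · exact hclV (hγV hyγ)
  refine ⟨K, Filter.mem_of_superset hU'n hU'K, ?_, hKN⟩
  intro u v hu hv hKuv hKu hKv
  -- ranges of arcs meeting U' and contained in closure V are inside K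
  have hrange : ∀ γ : I → X, Continuous γ → (Set.range γ ∩ U').Nonempty →
      Set.range γ ⊆ closure V → Set.range γ ⊆ K := by
    intro γ hγ hmU hγV y hy
    exact Or.inr ⟨γ, hγ, hmU, hγV, hy⟩
  have key : ∀ γ : I → X, Continuous γ → (Set.range γ ∩ U').Nonempty →
      Set.range γ ⊆ closure V → (Set.range γ ∩ u).Nonempty → (Set.range γ ∩ v).Nonempty →
      (K ∩ (u ∩ v)).Nonempty := by
    intro γ hγ hmU hγV hu' hv'
    have hpc : IsPreconnected (Set.range γ) := isPreconnected_range hγ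
    have hsub : Set.range γ ⊆ u ∪ v := (hrange γ hγ hmU hγV).trans hKuv
    obtain ⟨z, hz1, hz2⟩ := hpc u v hu hv hsub hu' hv'
    exact ⟨z, hrange γ hγ hmU hγV hz1, hz2⟩
  by_cases h1 : (U' ∩ u).Nonempty
  · by_cases h2 : (U' ∩ v).Nonempty
    · obtain ⟨γ, hγc, hγ0, hγ1, hγV⟩ := hprop (U' ∩ u) (U' ∩ v)
        (isOpen_interior.inter hu) (isOpen_interior.inter hv) h1 h2
        (Set.inter_subset_left.trans hU'U) (Set.inter_subset_left.trans hU'U)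
      exact key γ hγc ⟨γ 0, Set.mem_range_self 0, hγ0.1⟩ hγV
        ⟨γ 0, Set.mem_range_self 0, hγ0.2⟩ ⟨γ 1, Set.mem_range_self 1, hγ1.2⟩
    · -- U' ∩ v = ∅, so U' ⊆ u
      obtain ⟨b, hbK, hbv⟩ := hKv
      rcases hbK with hbU' | ⟨γ, hγc, hmU, hγV, hbγ⟩
      · exact absurd ⟨b, hbU', hbv⟩ h2
      · obtain ⟨w, hwγ, hwU'⟩ := hmU
        have hwu : w ∈ u := by
          rcases hKuv (hU'K hwU') with hw | hw
          · exact hw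
          · exact absurd ⟨w, hwU', hw⟩ h2
        exact key γ hγc ⟨w, hwγ, hwU'⟩ hγV ⟨w, hwγ, hwu⟩ ⟨b, hbγ, hbv⟩
  · -- U' ∩ u = ∅, so U' ⊆ v
    obtain ⟨a, haK, hau⟩ := hKu
    rcases haK with haU' | ⟨γ, hγc, hmU, hγV, haγ⟩
    · exact absurd ⟨a, haU', hau⟩ h1
    · obtain ⟨w, hwγ, hwU'⟩ := hmU
      have hwv : w ∈ v := by
        rcases hKuv (hU'K hwU') with hw | hw
        · exact absurd ⟨w, hwU', hw⟩ h1
        · exact hw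
      exact key γ hγc ⟨w, hwγ, hwU'⟩ hγV ⟨a, haγ, hau⟩ ⟨w, hwγ, hwv⟩
end

section
/- The space Y = ⋃_{n≥1} { (y_k) ∈ [0,1]^ℕ : y_n = 1 and y_k = 0 for all k > n } (subspace of the Hilbert cube) is neither arcwise connected nor locally arcwise connected. -/
/-!
Call `L n = {y | y n = 1 ∧ ∀ k > n, y k = 0}` the `n`-th level; `Y` is the disjoint union of the
levels, and every point of `Y` is a limit of points of higher levels (set one far-out coordinate
to `1`). So both claims follow once a path in `Y` is shown to stay in a single level.

Suppose a path `γ` meets levels `lo < hi` at times `s` and `t`. Coordinate `hi` of `γ` goes from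
`0` at `s` to `1` at `t`, so it takes a value `θ ∈ (0, 1)`; at the last such time `w` before `t`
the point `γ w` must lie in a level above `hi`, and coordinate `hi` stays `≥ θ` between `w` and
`t`. Iterating on the pair `(t, w)` yields nested intervals and levels `hi₀ < hi₁ < …` with
coordinate `hiⱼ` nonzero on the `j`-th interval. A common point of all the intervals would have
infinitely many nonzero coordinates, which no point of `Y` has.
-/

open unitInterval

def FiniteLevels : Set (ℕ → I) :=
  {y | ∃ n : ℕ, y n = 1 ∧ ∀ k > n, y k = (0 : I)}

open Set Filter Topology Function

section Crossing

variable {α β : Type*} [ConditionallyCompleteLinearOrder α] [TopologicalSpace α] [OrderTopology α]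
  [DenselyOrdered α] [LinearOrder β] [TopologicalSpace β] [OrderClosedTopology β]
  {g : α → β} {s t : α} {c : β}

theorem exists_mem_Icc_eq_and_forall_Icc_le (hg : Continuous g) (hst : s ≤ t) (hs : g s ≤ c)
    (ht : c ≤ g t) : ∃ w ∈ Icc s t, g w = c ∧ ∀ u ∈ Icc w t, c ≤ g u := by
  have ivt : ∀ u ∈ Icc s t, g u ≤ c → ∃ v ∈ Icc u t, g v = c := fun u hu hu' =>
    intermediate_value_Icc hu.2 hg.continuousOn ⟨hu', ht⟩
  set T := Icc s t ∩ g ⁻¹' {c}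
  have hT : IsClosed T := isClosed_Icc.inter (isClosed_singleton.preimage hg)
  have hTbdd : BddAbove T := bddAbove_Icc.mono inter_subset_left
  obtain ⟨v, hv, hvc⟩ := ivt s (left_mem_Icc.2 hst) hs
  have hw : sSup T ∈ T := hT.csSup_mem ⟨v, ⟨hv, hvc⟩⟩ hTbdd
  refine ⟨sSup T, hw.1, hw.2, fun u hu => le_of_not_gt fun hlt => ?_⟩
  obtain ⟨v, hv, hvc⟩ := ivt u ⟨hw.1.1.trans hu.1, hu.2⟩ hlt.le
  have hvw : v ≤ sSup T := le_csSup hTbdd ⟨⟨hw.1.1.trans (hu.1.trans hv.1), hv.2⟩, hvc⟩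
  have hvu : v = u := le_antisymm (hvw.trans hu.1) hv.1
  exact hlt.ne (hvu ▸ hvc)

theorem exists_mem_uIcc_eq_and_forall_uIcc_le (hg : Continuous g) (hs : g s ≤ c) (ht : c ≤ g t) :
    ∃ w ∈ uIcc s t, g w = c ∧ ∀ u ∈ uIcc w t, c ≤ g u := by
  rcases le_total s t with hst | hts
  · obtain ⟨w, hw, hwc, hle⟩ := exists_mem_Icc_eq_and_forall_Icc_le hg hst hs ht
    exact ⟨w, Icc_subset_uIcc hw, hwc, by rwa [uIcc_of_le hw.2]⟩
  · obtain ⟨w, ⟨hsw, hwt⟩, hwc, hle⟩ := exists_mem_Icc_eq_and_forall_Icc_le (α := αᵒᵈ) hg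
      (OrderDual.toDual_le_toDual.2 hts) hs ht
    refine ⟨OrderDual.ofDual w, Icc_subset_uIcc' ⟨hwt, hsw⟩, hwc, ?_⟩
    rw [uIcc_of_ge (show t ≤ OrderDual.ofDual w from hwt)]
    exact fun u hu => hle (OrderDual.toDual u) ⟨hu.2, hu.1⟩

end Crossing

theorem tendsto_update_cofinite {ι X : Type*} [DecidableEq ι] [TopologicalSpace X] (y : ι → X)
    (a : X) : Tendsto (fun i => update y i a) cofinite (𝓝 y) := by
  refine tendsto_pi_nhds.2 fun k => tendsto_const_nhds.congr' ?_
  filter_upwards [eventually_cofinite_ne k] with i hi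
  exact (update_of_ne hi.symm ..).symm

def HasLevel (y : ℕ → I) (n : ℕ) : Prop :=
  y n = 1 ∧ ∀ k > n, y k = 0

theorem HasLevel.lt_of_ne_zero_of_ne_one {y : ℕ → I} {n c : ℕ} (hy : HasLevel y n)
    (h0 : y c ≠ 0) (h1 : y c ≠ 1) : c < n := by
  by_contra! h
  rcases h.eq_or_lt with rfl | hlt
  · exact h1 hy.1
  · exact h0 (hy.2 c hlt)

theorem hasLevel_update {y : ℕ → I} {n : ℕ} (hy : ∀ k > n, y k = 0) :
    HasLevel (update y n 1) n :=
  ⟨update_self .., fun k hk => (update_of_ne hk.ne' ..).trans (hy k hk)⟩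

structure LevelClimb {α : Type*} (γ : α → ℕ → I) where
  (s t : α) (lo hi : ℕ)
  lo_lt_hi : lo < hi
  hasLevel_s : HasLevel (γ s) lo
  hasLevel_t : HasLevel (γ t) hi

section LevelClimb

variable {α : Type*} [ConditionallyCompleteLinearOrder α] [TopologicalSpace α] [OrderTopology α]
  [DenselyOrdered α] {γ : α → ℕ → I}

theorem LevelClimb.exists_next (hγ : Continuous γ) (hY : ∀ u, γ u ∈ FiniteLevels)
    (p : LevelClimb γ) : ∃ q : LevelClimb γ, q.lo = p.hi ∧
      uIcc q.s q.t ⊆ uIcc p.s p.t ∧ ∀ u ∈ uIcc q.s q.t, γ u q.lo ≠ 0 := by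
  obtain ⟨θ, hθ0, hθ1⟩ := exists_between (zero_lt_one' I)
  have hs : γ p.s p.hi ≤ θ := by rw [p.hasLevel_s.2 _ p.lo_lt_hi]; exact hθ0.le
  have ht : θ ≤ γ p.t p.hi := by rw [p.hasLevel_t.1]; exact hθ1.le
  obtain ⟨w, hw, hwθ, hle⟩ := exists_mem_uIcc_eq_and_forall_uIcc_le
    (g := fun u => γ u p.hi) ((continuous_apply p.hi).comp hγ) hs ht
  obtain ⟨c, hc⟩ : ∃ c, HasLevel (γ w) c := hY w
  have hlt : p.hi < c := hc.lt_of_ne_zero_of_ne_one (hwθ ▸ hθ0.ne') (hwθ ▸ hθ1.ne)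
  refine ⟨⟨p.t, w, p.hi, c, hlt, p.hasLevel_t, hc⟩, rfl, uIcc_subset_uIcc right_mem_uIcc hw,
    fun u hu => (hθ0.trans_le (hle u (uIcc_comm p.t w ▸ hu))).ne'⟩

theorem LevelClimb.isEmpty (hγ : Continuous γ) (hY : ∀ u, γ u ∈ FiniteLevels) :
    IsEmpty (LevelClimb γ) := by
  refine ⟨fun p => ?_⟩
  choose next hlo hsub hne using LevelClimb.exists_next hγ hY
  set q : ℕ → LevelClimb γ := fun n => next^[n] p
  have hq : ∀ n, q (n + 1) = next (q n) := fun n => iterate_succ_apply' next n p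
  have hmono : StrictMono fun n => (q n).lo := strictMono_nat_of_lt_succ fun n => by
    rw [hq, hlo]; exact (q n).lo_lt_hi
  obtain ⟨u, hu⟩ := IsCompact.nonempty_iInter_of_sequence_nonempty_isCompact_isClosed
    (fun n => uIcc (q n).s (q n).t) (fun n => hq n ▸ hsub (q n)) (fun _ => nonempty_uIcc)
    isCompact_uIcc (fun _ => isClosed_Icc)
  rw [mem_iInter] at hu
  obtain ⟨M, hM⟩ := hY u
  have hne' : γ u (q (M + 1)).lo ≠ 0 := hq M ▸ hne (q M) u (hq M ▸ hu (M + 1))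
  exact hne' (hM.2 _ (hmono.id_le (M + 1)))

end LevelClimb

theorem HasLevel.eq_of_joined {x y : FiniteLevels} (h : Joined x y) {n m : ℕ}
    (hx : HasLevel x n) (hy : HasLevel y m) : n = m := by
  obtain ⟨p⟩ := h
  let γ : I → ℕ → I := fun u => p u
  have := LevelClimb.isEmpty (γ := γ) (continuous_subtype_val.comp p.continuous) fun u => (p u).2
  rcases lt_trichotomy n m with h | h | h
  · exact isEmptyElim (⟨0, 1, n, m, h, by simpa [γ] using hx, by simpa [γ] using hy⟩ :
      LevelClimb γ)
  · exact h
  · exact isEmptyElim (⟨1, 0, m, n, h, by simpa [γ] using hy, by simpa [γ] using hx⟩ :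
      LevelClimb γ)

theorem pathComponent_notMem_nhds (x : FiniteLevels) : pathComponent x ∉ 𝓝 x := by
  intro hx
  obtain ⟨V, hV, hVx⟩ := (mem_nhds_subtype _ _ _).1 hx
  obtain ⟨n, hn⟩ := x.2
  have hlim := tendsto_update_cofinite (x : ℕ → I) 1
  rw [Nat.cofinite_eq_atTop] at hlim
  obtain ⟨m, hmV, hnm⟩ := ((hlim.eventually_mem hV).and (eventually_gt_atTop n)).exists
  have hm : HasLevel (update (x : ℕ → I) m 1) m :=
    hasLevel_update fun k hk => hn.2 k (hnm.trans hk)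
  exact hnm.ne (HasLevel.eq_of_joined (hVx (show ⟨_, m, hm⟩ ∈ _ from hmV)) hn hm)

/-- The subspace `Y` of the Hilbert cube consisting of sequences having some coordinate `1`
with all later coordinates `0` is neither arcwise connected nor locally arcwise connected. -/
theorem finiteLevels_not_pathConnected_nor_locPathConnected :
    ¬ PathConnectedSpace FiniteLevels ∧ ¬ LocPathConnectedSpace FiniteLevels := by
  let x : FiniteLevels := ⟨update 0 0 1, 0, hasLevel_update fun _ _ => rfl⟩
  refine ⟨fun h => pathComponent_notMem_nhds x ?_, fun h => pathComponent_notMem_nhds x ?_⟩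
  · exact mem_of_superset univ_mem fun y _ => h.joined x y
  · have : LocallyPathConnectedSpace FiniteLevels := h
    exact (IsOpen.pathComponent x).mem_nhds (mem_pathComponent_self x)
end

section
/- Let Y be the set ℝ × [0,∞) topologized so that points (x,y) with y > 0 have Euclidean neighborhoods and points (x,0) have neighborhood base {(x,0)} ∪ ((x, x+ε) × [0,ε)) for ε > 0. Then Y is not regular. -/
/-- The carrier: the closed upper half-plane `ℝ × [0,∞)`. -/
def HPlane : Type := {p : ℝ × ℝ // 0 ≤ p.2}

/-- Euclidean open disk of center `c` and radius `r`, as a subset of the half-plane. -/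
def eDisk (c : ℝ × ℝ) (r : ℝ) : Set HPlane :=
  {q | (q.val.1 - c.1)^2 + (q.val.2 - c.2)^2 < r^2}

/-- Points `(x,y)` with `y > 0` get Euclidean neighborhoods, while each boundary point `(x,0)`
gets the neighborhood base `{(x,0)} ∪ ((x, x+ε) × [0, ε))` for `ε > 0`. -/
instance : TopologicalSpace HPlane := TopologicalSpace.generateFrom
  ({S | ∃ c : ℝ × ℝ, 0 < c.2 ∧ ∃ r : ℝ, 0 < r ∧ r ≤ c.2 ∧ S = eDisk c r} ∪
   {S | ∃ x ε : ℝ, 0 < ε ∧ S = {q : HPlane | q.val = (x, 0)} ∪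
      {q : HPlane | x < q.val.1 ∧ q.val.1 < x + ε ∧ q.val.2 < ε}})

/-- Constructor for points of the half-plane. -/
def mkp (x y : ℝ) (h : 0 ≤ y) : HPlane := ⟨(x, y), h⟩

/-- Triangle neighborhood of the boundary point `(x,0)`. -/
def Tset (x ε : ℝ) : Set HPlane :=
  {q : HPlane | q.val = (x, 0)} ∪
  {q : HPlane | x < q.val.1 ∧ q.val.1 < x + ε ∧ q.val.2 < ε}

/-- The generating family. -/
def HGen : Set (Set HPlane) :=
  {S | ∃ c : ℝ × ℝ, 0 < c.2 ∧ ∃ r : ℝ, 0 < r ∧ r ≤ c.2 ∧ S = eDisk c r} ∪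
  {S | ∃ x ε : ℝ, 0 < ε ∧ S = Tset x ε}

lemma Tset_mono {x δ ε : ℝ} (h : δ ≤ ε) : Tset x δ ⊆ Tset x ε := by
  rintro q (hq | ⟨h1, h2, h3⟩)
  · exact Or.inl hq
  · exact Or.inr ⟨h1, by linarith, by linarith⟩

lemma eDisk_mono {c : ℝ × ℝ} {r₁ r₂ : ℝ} (h0 : 0 ≤ r₁) (h : r₁ ≤ r₂) :
    eDisk c r₁ ⊆ eDisk c r₂ := by
  intro q hq
  have : r₁ ^ 2 ≤ r₂ ^ 2 := by nlinarith
  exact lt_of_lt_of_le hq this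

/-- Complex embedding of a point of the plane. -/
noncomputable def cm (p : ℝ × ℝ) : ℂ := ⟨p.1, p.2⟩

lemma mem_eDisk_iff {c : ℝ × ℝ} {r : ℝ} (hr : 0 < r) (q : HPlane) :
    q ∈ eDisk c r ↔ dist (cm q.val) (cm c) < r := by
  rw [Complex.dist_eq_re_im, Real.sqrt_lt' hr]
  rfl

lemma isOpen_Tset {x ε : ℝ} (hε : 0 < ε) : IsOpen (Tset x ε) :=
  TopologicalSpace.GenerateOpen.basic _ (Or.inr ⟨x, ε, hε, rfl⟩)

/-- Neighborhood basis at the origin: triangle sets. -/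
lemma basisA {O : Set HPlane} (hO : IsOpen O) :
    ∀ p : HPlane, p.val = (0, 0) → p ∈ O → ∃ ε : ℝ, 0 < ε ∧ Tset 0 ε ⊆ O := by
  have hO' : TopologicalSpace.GenerateOpen HGen O := hO
  clear hO
  induction hO' with
  | basic s hs =>
    intro p hp0 hps
    rcases hs with ⟨c, hc, r, hr, hrc, rfl⟩ | ⟨x, ε', hε', rfl⟩
    · exfalso
      have h1 : (p.val.1 - c.1)^2 + (p.val.2 - c.2)^2 < r^2 := hps
      have h2 : p.val.2 = 0 := by rw [hp0]
      nlinarith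
    · rcases hps with hp | ⟨h1, h2, h3⟩
      · have hx : x = 0 := by
          have := hp.symm.trans hp0
          simpa using congrArg Prod.fst this
        subst hx
        exact ⟨ε', hε', subset_rfl⟩
      · simp only [hp0] at h1 h2 h3
        have h2' : (0 : ℝ) < x + ε' := by simpa using h2
        refine ⟨min ε' (x + ε'), lt_min hε' h2', ?_⟩
        rintro q (hq | ⟨g1, g2, g3⟩)
        · refine Or.inr ?_
          have hq' : q.val = (0, 0) := hq
          simp only [Set.mem_setOf_eq, hq']
          exact ⟨h1, h2', hε'⟩
        · refine Or.inr ⟨lt_trans h1 g1, ?_, ?_⟩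
          · have : q.val.1 < min ε' (x + ε') := by linarith [g2]
            exact lt_of_lt_of_le this (min_le_right _ _)
          · exact lt_of_lt_of_le g3 (min_le_left _ _)
  | univ => exact fun p _ _ => ⟨1, one_pos, fun q _ => trivial⟩
  | inter s t _ _ ihs iht =>
    intro p hp0 hps
    obtain ⟨ε₁, hε₁, h₁⟩ := ihs p hp0 hps.1
    obtain ⟨ε₂, hε₂, h₂⟩ := iht p hp0 hps.2
    exact ⟨min ε₁ ε₂, lt_min hε₁ hε₂,
      fun q hq => ⟨h₁ (Tset_mono (min_le_left _ _) hq), h₂ (Tset_mono (min_le_right _ _) hq)⟩⟩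
  | sUnion S hS ih =>
    intro p hp0 hps
    obtain ⟨s, hsS, hpss⟩ := hps
    obtain ⟨ε, hε, h⟩ := ih s hsS p hp0 hpss
    exact ⟨ε, hε, fun q hq => ⟨s, hsS, h hq⟩⟩

/-- Neighborhood basis at interior points: Euclidean disks. -/
lemma basisB {O : Set HPlane} (hO : IsOpen O) :
    ∀ z : HPlane, 0 < z.val.2 → z ∈ O → ∃ r : ℝ, 0 < r ∧ eDisk z.val r ⊆ O := by
  have hO' : TopologicalSpace.GenerateOpen HGen O := hO
  clear hO
  induction hO' with
  | basic s hs =>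
    intro z hz hzs
    rcases hs with ⟨c, hc, r', hr', hrc, rfl⟩ | ⟨x, ε', hε', rfl⟩
    · -- disk case: shrink around z
      have hd : dist (cm z.val) (cm c) < r' := (mem_eDisk_iff hr' z).mp hzs
      refine ⟨r' - dist (cm z.val) (cm c), by linarith, ?_⟩
      intro q hq
      have hq' : dist (cm q.val) (cm z.val) < r' - dist (cm z.val) (cm c) :=
        (mem_eDisk_iff (by linarith) q).mp hq
      rw [mem_eDisk_iff hr']
      calc dist (cm q.val) (cm c) ≤ dist (cm q.val) (cm z.val) + dist (cm z.val) (cm c) :=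
            dist_triangle _ _ _
        _ < r' := by linarith
    · -- triangle case
      rcases hzs with hp | ⟨h1, h2, h3⟩
      · exfalso
        have hz0 : z.val.2 = 0 := by rw [hp]
        linarith
      · refine ⟨min (z.val.1 - x) (min (x + ε' - z.val.1) (ε' - z.val.2)),
          lt_min (by linarith) (lt_min (by linarith) (by linarith)), ?_⟩
        intro q hq
        have hqd : (q.val.1 - z.val.1)^2 + (q.val.2 - z.val.2)^2
            < (min (z.val.1 - x) (min (x + ε' - z.val.1) (ε' - z.val.2)))^2 := hq
        set R := min (z.val.1 - x) (min (x + ε' - z.val.1) (ε' - z.val.2)) with hR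
        have hRpos : 0 < R := lt_min (by linarith) (lt_min (by linarith) (by linarith))
        have ha : |q.val.1 - z.val.1| < R :=
          abs_lt_of_sq_lt_sq (by nlinarith) hRpos.le
        have hb : |q.val.2 - z.val.2| < R :=
          abs_lt_of_sq_lt_sq (by nlinarith) hRpos.le
        rw [abs_lt] at ha hb
        have hR1 : R ≤ z.val.1 - x := min_le_left _ _
        have hR2 : R ≤ x + ε' - z.val.1 := le_trans (min_le_right _ _) (min_le_left _ _)
        have hR3 : R ≤ ε' - z.val.2 := le_trans (min_le_right _ _) (min_le_right _ _)
        exact Or.inr ⟨by linarith [ha.1], by linarith [ha.2], by linarith [hb.2]⟩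
  | univ => exact fun z hz _ => ⟨1, one_pos, fun q _ => trivial⟩
  | inter s t _ _ ihs iht =>
    intro z hz hzs
    obtain ⟨r₁, hr₁, h₁⟩ := ihs z hz hzs.1
    obtain ⟨r₂, hr₂, h₂⟩ := iht z hz hzs.2
    exact ⟨min r₁ r₂, lt_min hr₁ hr₂,
      fun q hq => ⟨h₁ (eDisk_mono (le_min hr₁.le hr₂.le) (min_le_left _ _) hq),
        h₂ (eDisk_mono (le_min hr₁.le hr₂.le) (min_le_right _ _) hq)⟩⟩
  | sUnion S _ ih =>
    intro z hz hzs
    obtain ⟨s, hsS, hzss⟩ := hzs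
    obtain ⟨r, hr, h⟩ := ih s hsS z hz hzss
    exact ⟨r, hr, fun q hq => ⟨s, hsS, h hq⟩⟩

/-- The point `(0, ε/2)` lies in the closure of the triangle neighborhood `Tset 0 ε`. -/
lemma mem_closure_Tset {ε : ℝ} (hε : 0 < ε) :
    mkp 0 (ε / 2) (by positivity) ∈ closure (Tset 0 ε) := by
  rw [mem_closure_iff]
  intro o ho hzo
  obtain ⟨r, hr, hsub⟩ := basisB ho (mkp 0 (ε / 2) (by positivity))
    (by show (0:ℝ) < ε / 2; positivity) hzo
  set t := min r ε with ht
  have htpos : 0 < t := lt_min hr hε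
  refine ⟨mkp (t / 2) (ε / 2) (by positivity), hsub ?_, ?_⟩
  · show (t / 2 - 0)^2 + (ε / 2 - ε / 2)^2 < r^2
    have h1 : t ≤ r := min_le_left _ _
    nlinarith
  · refine Or.inr ⟨by show (0:ℝ) < t / 2; positivity, ?_,
      by show (ε / 2 : ℝ) < ε; linarith⟩
    show t / 2 < 0 + ε
    have h2 : t ≤ ε := min_le_right _ _
    linarith

/-- The space `ℝ × [0,∞)` with Euclidean neighborhoods at interior points and the half-open
triangle neighborhoods `{(x,0)} ∪ ((x, x+ε) × [0,ε))` at boundary points is not regular. -/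
theorem hPlane_not_regular : ¬ RegularSpace HPlane := by
  intro hreg
  set p : HPlane := mkp 0 0 le_rfl with hp
  have hUopen : IsOpen (Tset 0 1) := isOpen_Tset one_pos
  have hpU : p ∈ Tset 0 1 := Or.inl rfl
  obtain ⟨t, ⟨ht_nhds, ht_closed⟩, hts⟩ :=
    (closed_nhds_basis p).mem_iff.mp (hUopen.mem_nhds hpU)
  obtain ⟨O, hOt, hOopen, hpO⟩ := mem_nhds_iff.mp ht_nhds
  obtain ⟨ε, hε, hsub⟩ := basisA hOopen p rfl hpO
  have hz : mkp 0 (ε / 2) (by positivity) ∈ t := by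
    have h1 : closure (Tset 0 ε) ⊆ closure t :=
      closure_mono (fun q hq => hOt (hsub hq))
    have h2 : closure t = t := ht_closed.closure_eq
    exact h2 ▸ h1 (mem_closure_Tset hε)
  have hzU : mkp 0 (ε / 2) (by positivity) ∈ Tset 0 1 := hts hz
  rcases hzU with h | ⟨h1, _, _⟩
  · have : (ε / 2 : ℝ) = 0 := congrArg Prod.snd h
    linarith
  · exact lt_irrefl (0 : ℝ) h1
end

section
/- Let X be a topological space, (Y,d) a metric space, and f : X → Y. Suppose for some n ≥ 2 there are strictly functionally discrete families F₀,…,F_n of subsets of X with F₀ = {X}, maps p_k : F_k → Y such that (B) sup_{x∈F} d(f(x), p_k(F)) < 2^{-(k+2)} for each F ∈ F_k; (C) each member of F_{k+1} is contained in some member of F_k; (D) p₀(X) and p₁(F) can be joined by a path in Y for every F ∈ F₁; (E) for 1 ≤ k < n, whenever F ∈ F_{k+1} is contained in F' ∈ F_k, the points p_{k+1}(F) and p_k(F') can be joined by a path of diameter < 2^{-(k+2)} in Y. Then there exists a continuous g : X → Y such that d(f(x), g(x)) < 2^{-k} for every 1 ≤ k ≤ n and every x in the union of F_k. -/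
/-- A family `𝓐` of subsets of `X` is strictly functionally discrete if for each `A ∈ 𝓐` there
is a continuous `f_A : X → [0,1]` with `A ⊆ f_A⁻¹({0})` such that the family
`(f_A⁻¹([0,1)) : A ∈ 𝓐)` is discrete. -/
def StrictlyFunctionallyDiscrete {X : Type*} [TopologicalSpace X] (𝓐 : Set (Set X)) : Prop :=
  ∃ g : Set X → (X → ℝ),
    (∀ A ∈ 𝓐, Continuous (g A) ∧ (∀ x, g A x ∈ Set.Icc (0:ℝ) 1) ∧ A ⊆ (g A) ⁻¹' {0}) ∧
    ∀ x : X, ∃ U : Set X, IsOpen U ∧ x ∈ U ∧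
      ∀ A ∈ 𝓐, ∀ B ∈ 𝓐,
        (U ∩ {y | g A y < 1}).Nonempty → (U ∩ {y | g B y < 1}).Nonempty → A = B

section AppxAux

variable {X Y : Type*} [TopologicalSpace X] [MetricSpace Y]

noncomputable def AppxPsi (Φ : ℕ → Set X → X → ℝ) (par : ℕ → Set X → Set X) :
    ℕ → Set X → X → ℝ
  | 0, _, _ => 0
  | k+1, F, x => max (Φ (k+1) F x) (AppxPsi Φ par k (par k F) x)

def AppxDown {X : Type*} (par : ℕ → Set X → Set X) : ℕ → ℕ → Set X → Set X
  | 0, _, F => F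
  | i+1, j, F => AppxDown par i (j-1) (par (j-1) F)

noncomputable def AppxVal {X Y : Type*} (p0 : Y) (par : ℕ → Set X → Set X)
    (Q : ℕ → Set X → ℝ → Y) : ℕ → Set X → ℝ → Y
  | 0, _, _ => p0
  | j+1, F, s => if s ≤ 1 then Q (j+1) F s else AppxVal p0 par Q j (par j F) (s-1)

open scoped Classical in
noncomputable def AppxFb {X : Type*} (𝓕 : ℕ → Set (Set X)) (ψ : ℕ → Set X → X → ℝ)
    (k : ℕ) (x : X) : Set X :=
  if h : ∃ F ∈ 𝓕 k, ψ k F x < 1 then h.choose else Set.univ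

open scoped Classical in
noncomputable def AppxPsib {X : Type*} (𝓕 : ℕ → Set (Set X)) (ψ : ℕ → Set X → X → ℝ)
    (k : ℕ) (x : X) : ℝ :=
  if ∃ F ∈ 𝓕 k, ψ k F x < 1 then ψ k (AppxFb 𝓕 ψ k x) x else 1

open scoped Classical in
noncomputable def AppxM {X : Type*} (𝓕 : ℕ → Set (Set X)) (ψ : ℕ → Set X → X → ℝ)
    (n : ℕ) (x : X) : ℕ :=
  Nat.findGreatest (fun k => ∃ F ∈ 𝓕 k, ψ k F x < 1) n

variable {𝓕 : ℕ → Set (Set X)} {n : ℕ} {Φ : ℕ → Set X → X → ℝ} {par : ℕ → Set X → Set X}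

lemma AppxFb_spec {X : Type*} {𝓕 : ℕ → Set (Set X)} {ψ : ℕ → Set X → X → ℝ} {k : ℕ} {x : X}
    (h : ∃ F ∈ 𝓕 k, ψ k F x < 1) :
    AppxFb 𝓕 ψ k x ∈ 𝓕 k ∧ ψ k (AppxFb 𝓕 ψ k x) x < 1 := by
  rw [AppxFb, dif_pos h]
  exact ⟨h.choose_spec.1, h.choose_spec.2⟩

lemma AppxPsib_pos {X : Type*} {𝓕 : ℕ → Set (Set X)} {ψ : ℕ → Set X → X → ℝ} {k : ℕ} {x : X}
    (h : ∃ F ∈ 𝓕 k, ψ k F x < 1) :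
    AppxPsib 𝓕 ψ k x = ψ k (AppxFb 𝓕 ψ k x) x := by
  rw [AppxPsib, if_pos h]

lemma AppxPsib_neg {X : Type*} {𝓕 : ℕ → Set (Set X)} {ψ : ℕ → Set X → X → ℝ} {k : ℕ} {x : X}
    (h : ¬ ∃ F ∈ 𝓕 k, ψ k F x < 1) :
    AppxPsib 𝓕 ψ k x = 1 := by
  rw [AppxPsib, if_neg h]

open scoped Classical in
lemma AppxM_le {X : Type*} {𝓕 : ℕ → Set (Set X)} {ψ : ℕ → Set X → X → ℝ} {n : ℕ} {x : X} :
    AppxM 𝓕 ψ n x ≤ n := Nat.findGreatest_le n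

open scoped Classical in
lemma AppxM_spec {X : Type*} {𝓕 : ℕ → Set (Set X)} {ψ : ℕ → Set X → X → ℝ} {n : ℕ} {x : X}
    (h : ∃ F ∈ 𝓕 0, ψ 0 F x < 1) :
    ∃ F ∈ 𝓕 (AppxM 𝓕 ψ n x), ψ (AppxM 𝓕 ψ n x) F x < 1 :=
  Nat.findGreatest_spec (P := fun k => ∃ F ∈ 𝓕 k, ψ k F x < 1) (Nat.zero_le n) h

open scoped Classical in
lemma AppxM_ge {X : Type*} {𝓕 : ℕ → Set (Set X)} {ψ : ℕ → Set X → X → ℝ} {n k : ℕ} {x : X}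
    (hk : k ≤ n) (h : ∃ F ∈ 𝓕 k, ψ k F x < 1) :
    k ≤ AppxM 𝓕 ψ n x :=
  Nat.le_findGreatest hk h

lemma AppxPsi_nonneg : ∀ (k : ℕ) (F : Set X) (x : X), 0 ≤ AppxPsi Φ par k F x := by
  intro k
  induction k with
  | zero => intro F x; simp [AppxPsi]
  | succ k ih =>
    intro F x
    exact le_trans (ih (par k F) x) (le_max_right _ _)

lemma AppxPsi_le_one (hΦle : ∀ k ≤ n, ∀ A ∈ 𝓕 k, ∀ x, Φ k A x ≤ 1)
    (hparmem : ∀ k < n, ∀ F ∈ 𝓕 (k+1), par k F ∈ 𝓕 k) :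
    ∀ k ≤ n, ∀ F ∈ 𝓕 k, ∀ x, AppxPsi Φ par k F x ≤ 1 := by
  intro k
  induction k with
  | zero => intro _ F _ x; simp [AppxPsi]
  | succ k ih =>
    intro hk F hF x
    refine max_le (hΦle _ hk F hF x) (ih (by omega) _ (hparmem k (by omega) F hF) x)

lemma AppxPsi_zero (hΦzero : ∀ k ≤ n, ∀ A ∈ 𝓕 k, ∀ x ∈ A, Φ k A x = 0)
    (hparmem : ∀ k < n, ∀ F ∈ 𝓕 (k+1), par k F ∈ 𝓕 k)
    (hparsub : ∀ k < n, ∀ F ∈ 𝓕 (k+1), F ⊆ par k F) :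
    ∀ k ≤ n, ∀ F ∈ 𝓕 k, ∀ x ∈ F, AppxPsi Φ par k F x = 0 := by
  intro k
  induction k with
  | zero => intro _ F _ x _; simp [AppxPsi]
  | succ k ih =>
    intro hk F hF x hx
    have h1 : Φ (k+1) F x = 0 := hΦzero _ hk F hF x hx
    have h2 : AppxPsi Φ par k (par k F) x = 0 :=
      ih (by omega) _ (hparmem k (by omega) F hF) x (hparsub k (by omega) F hF hx)
    simp [AppxPsi, h1, h2]

lemma AppxPsi_cont (hΦcont : ∀ k ≤ n, ∀ A ∈ 𝓕 k, Continuous (Φ k A))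
    (hparmem : ∀ k < n, ∀ F ∈ 𝓕 (k+1), par k F ∈ 𝓕 k) :
    ∀ k ≤ n, ∀ F ∈ 𝓕 k, Continuous (fun x => AppxPsi Φ par k F x) := by
  intro k
  induction k with
  | zero => intro _ F _; simpa [AppxPsi] using continuous_const
  | succ k ih =>
    intro hk F hF
    have h1 := hΦcont _ hk F hF
    have h2 := ih (by omega) _ (hparmem k (by omega) F hF)
    simpa [AppxPsi] using h1.max h2

lemma AppxPsi_phi_le (k : ℕ) (F : Set X) (x : X) :
    Φ (k+1) F x ≤ AppxPsi Φ par (k+1) F x := le_max_left _ _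

lemma AppxPsi_par_le (k : ℕ) (F : Set X) (x : X) :
    AppxPsi Φ par k (par k F) x ≤ AppxPsi Φ par (k+1) F x := le_max_right _ _

lemma AppxDown_mem (hparmem : ∀ k < n, ∀ F ∈ 𝓕 (k+1), par k F ∈ 𝓕 k) :
    ∀ (i j : ℕ), i ≤ j → j ≤ n → ∀ F ∈ 𝓕 j, AppxDown par i j F ∈ 𝓕 (j - i) := by
  intro i
  induction i with
  | zero => intro j _ _ F hF; simpa [AppxDown] using hF
  | succ i ih =>
    intro j hij hjn F hF
    obtain ⟨j', rfl⟩ : ∃ j', j = j' + 1 := ⟨j - 1, by omega⟩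
    have h1 : par j' F ∈ 𝓕 j' := hparmem j' (by omega) F hF
    have := ih j' (by omega) (by omega) _ h1
    simpa [AppxDown] using this

lemma AppxPsi_down_le :
    ∀ (i j : ℕ), i ≤ j → ∀ (F : Set X) (x : X),
      AppxPsi Φ par (j - i) (AppxDown par i j F) x ≤ AppxPsi Φ par j F x := by
  intro i
  induction i with
  | zero => intro j _ F x; simp [AppxDown]
  | succ i ih =>
    intro j hij F x
    obtain ⟨j', rfl⟩ : ∃ j', j = j' + 1 := ⟨j - 1, by omega⟩
    have h1 : AppxPsi Φ par (j' - i) (AppxDown par i j' (par j' F)) x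
        ≤ AppxPsi Φ par j' (par j' F) x := ih j' (by omega) _ x
    have h2 : AppxPsi Φ par j' (par j' F) x ≤ AppxPsi Φ par (j'+1) F x := le_max_right _ _
    have e : (j' + 1) - (i + 1) = j' - i := by omega
    calc AppxPsi Φ par ((j'+1) - (i+1)) (AppxDown par (i+1) (j'+1) F) x
        = AppxPsi Φ par (j' - i) (AppxDown par i j' (par j' F)) x := by
          rw [e]; rfl
      _ ≤ AppxPsi Φ par (j'+1) F x := le_trans h1 h2

end AppxAux

section AppxVal2

variable {X Y : Type*} [TopologicalSpace X] [MetricSpace Y]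
variable {𝓕 : ℕ → Set (Set X)} {n : ℕ} {par : ℕ → Set X → Set X}
variable {p : ℕ → Set X → Y} {Q : ℕ → Set X → ℝ → Y}

lemma AppxVal_zero (h𝓕0 : 𝓕 0 = {Set.univ})
    (hQ0 : ∀ (k : ℕ) (F : Set X), ∀ s ≤ (0:ℝ), Q k F s = p k F) :
    ∀ j ≤ n, ∀ F ∈ 𝓕 j, AppxVal (p 0 Set.univ) par Q j F 0 = p j F := by
  intro j
  induction j with
  | zero =>
    intro _ F hF
    have : F = Set.univ := by rw [h𝓕0] at hF; simpa using hF
    simp [AppxVal, this]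
  | succ j _ =>
    intro _ F _
    have h1 : (0:ℝ) ≤ 1 := by norm_num
    simp [AppxVal, h1, hQ0 (j+1) F 0 le_rfl]

lemma AppxVal_cont (h𝓕0 : 𝓕 0 = {Set.univ})
    (hQ0 : ∀ (k : ℕ) (F : Set X), ∀ s ≤ (0:ℝ), Q k F s = p k F)
    (hQcont : ∀ (k : ℕ) (F : Set X), Continuous (Q k F))
    (hQ1 : ∀ (k : ℕ), 1 ≤ k → k ≤ n → ∀ F ∈ 𝓕 k, Q k F 1 = p (k-1) (par (k-1) F))
    (hparmem : ∀ k < n, ∀ F ∈ 𝓕 (k+1), par k F ∈ 𝓕 k) :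
    ∀ j ≤ n, ∀ F ∈ 𝓕 j, Continuous (AppxVal (p 0 Set.univ) par Q j F) := by
  intro j
  induction j with
  | zero => intro _ F _; simpa [AppxVal] using continuous_const
  | succ j ih =>
    intro hj F hF
    have hpar : par j F ∈ 𝓕 j := hparmem j (by omega) F hF
    have hin : Continuous (AppxVal (p 0 Set.univ) par Q j (par j F)) := ih (by omega) _ hpar
    show Continuous fun s =>
      if s ≤ 1 then Q (j+1) F s else AppxVal (p 0 Set.univ) par Q j (par j F) (s-1)
    apply Continuous.if_le (hQcont (j+1) F) (hin.comp (continuous_id.sub continuous_const))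
      continuous_id continuous_const
    intro s hs
    subst hs
    have e0 : (1:ℝ) - 1 = 0 := by norm_num
    rw [hQ1 (j+1) (Nat.le_add_left 1 j) hj F hF]
    show p (j+1-1) (par (j+1-1) F) = AppxVal (p 0 Set.univ) par Q j (par j F) (1 - 1)
    simp only [Nat.add_sub_cancel]
    rw [e0, AppxVal_zero (n:=n) h𝓕0 hQ0 j (by omega) _ hpar]

lemma AppxVal_shift (h𝓕0 : 𝓕 0 = {Set.univ})
    (hQ0 : ∀ (k : ℕ) (F : Set X), ∀ s ≤ (0:ℝ), Q k F s = p k F)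
    (hQ1 : ∀ (k : ℕ), 1 ≤ k → k ≤ n → ∀ F ∈ 𝓕 k, Q k F 1 = p (k-1) (par (k-1) F))
    (hparmem : ∀ k < n, ∀ F ∈ 𝓕 (k+1), par k F ∈ 𝓕 k) :
    ∀ j, j + 1 ≤ n → ∀ F ∈ 𝓕 (j+1), ∀ s : ℝ, 0 ≤ s →
      AppxVal (p 0 Set.univ) par Q (j+1) F (s+1) = AppxVal (p 0 Set.univ) par Q j (par j F) s := by
  intro j hj F hF s hs
  have hpar : par j F ∈ 𝓕 j := hparmem j (by omega) F hF
  show (if s + 1 ≤ 1 then Q (j+1) F (s+1)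
      else AppxVal (p 0 Set.univ) par Q j (par j F) (s+1-1)) = _
  by_cases h : s + 1 ≤ (1:ℝ)
  · have hs0 : s = 0 := le_antisymm (by linarith) hs
    subst hs0
    rw [if_pos h]
    have e : (0:ℝ)+1 = 1 := by norm_num
    rw [e, hQ1 (j+1) (Nat.le_add_left 1 j) hj F hF]
    simp only [Nat.add_sub_cancel]
    rw [AppxVal_zero (n:=n) h𝓕0 hQ0 j (by omega) _ hpar]
  · rw [if_neg h]
    norm_num

lemma AppxVal_iter (h𝓕0 : 𝓕 0 = {Set.univ})
    (hQ0 : ∀ (k : ℕ) (F : Set X), ∀ s ≤ (0:ℝ), Q k F s = p k F)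
    (hQ1 : ∀ (k : ℕ), 1 ≤ k → k ≤ n → ∀ F ∈ 𝓕 k, Q k F 1 = p (k-1) (par (k-1) F))
    (hparmem : ∀ k < n, ∀ F ∈ 𝓕 (k+1), par k F ∈ 𝓕 k) :
    ∀ (i j : ℕ), j + i ≤ n → ∀ F ∈ 𝓕 (j+i), ∀ s : ℝ, 0 ≤ s →
      AppxVal (p 0 Set.univ) par Q (j+i) F (s + i)
        = AppxVal (p 0 Set.univ) par Q j (AppxDown par i (j+i) F) s := by
  intro i
  induction i with
  | zero => intro j _ F _ s _; simp [AppxDown]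
  | succ i ih =>
    intro j hji F hF s hs
    have hpar : par (j+i) F ∈ 𝓕 (j+i) := hparmem (j+i) (by omega) F (by
      have : j + (i+1) = (j+i) + 1 := by omega
      rwa [this] at hF)
    have e1 : (s + (i+1 : ℕ) : ℝ) = (s + i) + 1 := by push_cast; ring
    have e2 : j + (i+1) = (j + i) + 1 := by omega
    have step := AppxVal_shift (n := n) h𝓕0 hQ0 hQ1 hparmem (j+i) (by omega)
      F (by rwa [e2] at hF) (s + i) (by positivity)
    have e3 : AppxDown par (i+1) (j+i+1) F = AppxDown par i (j+i) (par (j+i) F) := by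
      show AppxDown par (i+1) ((j+i)+1) F = _
      simp [AppxDown]
    calc AppxVal (p 0 Set.univ) par Q (j+(i+1)) F (s + (i+1 : ℕ))
        = AppxVal (p 0 Set.univ) par Q ((j+i)+1) F ((s+i)+1) := by rw [e2, e1]
      _ = AppxVal (p 0 Set.univ) par Q (j+i) (par (j+i) F) (s+i) := step
      _ = AppxVal (p 0 Set.univ) par Q j (AppxDown par i (j+i) (par (j+i) F)) s :=
          ih j (by omega) _ hpar s hs
      _ = AppxVal (p 0 Set.univ) par Q j (AppxDown par (i+1) (j+(i+1)) F) s := by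
          rw [e2, e3]

lemma AppxVal_dist (h𝓕0 : 𝓕 0 = {Set.univ})
    (hQ0 : ∀ (k : ℕ) (F : Set X), ∀ s ≤ (0:ℝ), Q k F s = p k F)
    (hQ1 : ∀ (k : ℕ), 1 ≤ k → k ≤ n → ∀ F ∈ 𝓕 k, Q k F 1 = p (k-1) (par (k-1) F))
    (hQd : ∀ (k : ℕ), 2 ≤ k → k ≤ n → ∀ F ∈ 𝓕 k, ∀ s : ℝ,
      dist (Q k F s) (Q k F 1) ≤ 1/2^(k+1))
    (hparmem : ∀ k < n, ∀ F ∈ 𝓕 (k+1), par k F ∈ 𝓕 k) :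
    ∀ (i k : ℕ), 1 ≤ k → k + i ≤ n → ∀ F ∈ 𝓕 (k+i), ∀ s : ℝ, s ≤ i →
      dist (AppxVal (p 0 Set.univ) par Q (k+i) F s) (p k (AppxDown par i (k+i) F))
        ≤ 1/2^(k+1) - 1/2^(k+i+1) := by
  intro i
  induction i with
  | zero =>
    intro k hk hkn F hF s hs
    obtain ⟨k', rfl⟩ : ∃ k', k = k' + 1 := ⟨k - 1, by omega⟩
    have hs0 : s ≤ (0:ℝ) := by simpa using hs
    have hs1 : s ≤ (1:ℝ) := by linarith
    have : AppxVal (p 0 Set.univ) par Q (k'+1) F s = Q (k'+1) F s := by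
      show (if s ≤ 1 then Q (k'+1) F s else _) = _
      rw [if_pos hs1]
    rw [this]
    rw [hQ0 _ F s hs0]
    simp [AppxDown]
  | succ i ih =>
    intro k hk hkn F hF s hs
    have e2 : k + (i+1) = (k+i) + 1 := by omega
    have hF' : F ∈ 𝓕 ((k+i)+1) := by rwa [e2] at hF
    have hpar : par (k+i) F ∈ 𝓕 (k+i) := hparmem (k+i) (by omega) F hF'
    have edown : AppxDown par (i+1) (k+(i+1)) F = AppxDown par i (k+i) (par (k+i) F) := by
      rw [e2]; simp [AppxDown]
    have hhalf : (1:ℝ)/2^(k+i+2) + 1/2^(k+i+2) = 1/2^(k+i+1) := by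
      rw [pow_succ]; ring
    by_cases hcase : s ≤ (1:ℝ)
    · have hval : AppxVal (p 0 Set.univ) par Q (k+(i+1)) F s = Q ((k+i)+1) F s := by
        rw [e2]
        show (if s ≤ 1 then Q ((k+i)+1) F s else _) = _
        rw [if_pos hcase]
      have h1 : dist (Q ((k+i)+1) F s) (Q ((k+i)+1) F 1) ≤ 1/2^(k+i+2) :=
        hQd ((k+i)+1) (by omega) (by omega) F hF' s
      have h2 : Q ((k+i)+1) F 1 = p (k+i) (par (k+i) F) := by
        have := hQ1 ((k+i)+1) (Nat.le_add_left 1 (k+i)) (by omega) F hF'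
        simpa using this
      have h3 : dist (p (k+i) (par (k+i) F)) (p k (AppxDown par i (k+i) (par (k+i) F)))
          ≤ 1/2^(k+1) - 1/2^(k+i+1) := by
        have h0 := ih k hk (by omega) _ hpar 0 (by positivity)
        rwa [AppxVal_zero (n:=n) h𝓕0 hQ0 (k+i) (by omega) _ hpar] at h0
      calc dist (AppxVal (p 0 Set.univ) par Q (k+(i+1)) F s) (p k (AppxDown par (i+1) (k+(i+1)) F))
          ≤ dist (Q ((k+i)+1) F s) (Q ((k+i)+1) F 1)
            + dist (Q ((k+i)+1) F 1) (p k (AppxDown par (i+1) (k+(i+1)) F)) := by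
            rw [hval]; exact dist_triangle _ _ _
        _ ≤ 1/2^(k+i+2) + (1/2^(k+1) - 1/2^(k+i+1)) := by
            rw [h2] at h1
            rw [h2, edown]
            exact add_le_add h1 h3
        _ ≤ 1/2^(k+1) - 1/2^(k+(i+1)+1) := by
            have e4 : k+(i+1)+1 = k+i+2 := by omega
            rw [e4]; linarith
    · have hval : AppxVal (p 0 Set.univ) par Q (k+(i+1)) F s
          = AppxVal (p 0 Set.univ) par Q (k+i) (par (k+i) F) (s-1) := by
        rw [e2]
        show (if s ≤ 1 then Q ((k+i)+1) F s else _) = _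
        rw [if_neg hcase]
      have h4 := ih k hk (by omega) _ hpar (s-1) (by push_cast at hs ⊢; linarith)
      rw [hval, edown]
      have h5 : (1:ℝ)/2^(k+(i+1)+1) ≤ 1/2^(k+i+1) := by
        have e4 : k+(i+1)+1 = k+i+2 := by omega
        rw [e4]
        have : (0:ℝ) < 2^(k+i+1) := by positivity
        rw [pow_succ]
        apply div_le_div_of_nonneg_left (by norm_num) this
        nlinarith
      linarith

end AppxVal2


/-- Approximation lemma: from strictly functionally discrete towers of families with
compatible centers joined by short paths, one builds a single continuous map `g` uniformly
close to `f` on the union of each level. -/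
theorem approximation_lemma {X Y : Type*} [TopologicalSpace X] [MetricSpace Y]
    (f : X → Y) (n : ℕ) (hn : 2 ≤ n) (𝓕 : ℕ → Set (Set X)) (p : ℕ → Set X → Y)
    (hsfd : ∀ k ≤ n, StrictlyFunctionallyDiscrete (𝓕 k))
    (hA : 𝓕 0 = {Set.univ})
    (hB : ∀ k ≤ n, ∀ F ∈ 𝓕 k, ∀ x ∈ F, dist (f x) (p k F) < 1 / 2 ^ (k + 2))
    (hC : ∀ k < n, ∀ F ∈ 𝓕 (k + 1), ∃ F' ∈ 𝓕 k, F ⊆ F')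
    (hD : ∀ F ∈ 𝓕 1, Joined (p 0 Set.univ) (p 1 F))
    (hE : ∀ k, 1 ≤ k → k < n → ∀ F ∈ 𝓕 (k + 1), ∀ F' ∈ 𝓕 k, F ⊆ F' →
      ∃ γ : Path (p (k + 1) F) (p k F'), Metric.diam (Set.range γ) < 1 / 2 ^ (k + 2)) :
    ∃ g : X → Y, Continuous g ∧
      ∀ k, 1 ≤ k → k ≤ n → ∀ x ∈ ⋃₀ 𝓕 k, dist (f x) (g x) < 1 / 2 ^ k := by
  classical
  -- Step 1: choose the discreteness functions Φ
  have hΦex : ∀ k : ℕ, ∃ Φk : Set X → X → ℝ, k ≤ n →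
      (∀ A ∈ 𝓕 k, Continuous (Φk A) ∧ (∀ x, Φk A x ∈ Set.Icc (0:ℝ) 1) ∧ A ⊆ (Φk A) ⁻¹' {0}) ∧
      ∀ x : X, ∃ U : Set X, IsOpen U ∧ x ∈ U ∧
        ∀ A ∈ 𝓕 k, ∀ B ∈ 𝓕 k,
          (U ∩ {y | Φk A y < 1}).Nonempty → (U ∩ {y | Φk B y < 1}).Nonempty → A = B := by
    intro k
    by_cases h : k ≤ n
    · obtain ⟨g, hg⟩ := hsfd k h
      exact ⟨g, fun _ => hg⟩
    · exact ⟨fun _ _ => 1, fun hk => absurd hk h⟩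
  choose Φ hΦ using hΦex
  have hΦcont : ∀ k ≤ n, ∀ A ∈ 𝓕 k, Continuous (Φ k A) :=
    fun k hk A hA' => ((hΦ k hk).1 A hA').1
  have hΦle : ∀ k ≤ n, ∀ A ∈ 𝓕 k, ∀ x, Φ k A x ≤ 1 :=
    fun k hk A hA' x => (((hΦ k hk).1 A hA').2.1 x).2
  have hΦzero : ∀ k ≤ n, ∀ A ∈ 𝓕 k, ∀ x ∈ A, Φ k A x = 0 :=
    fun k hk A hA' x hx => ((hΦ k hk).1 A hA').2.2 hx
  have hΦU : ∀ k ≤ n, ∀ x : X, ∃ U : Set X, IsOpen U ∧ x ∈ U ∧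
      ∀ A ∈ 𝓕 k, ∀ B ∈ 𝓕 k,
        (U ∩ {y | Φ k A y < 1}).Nonempty → (U ∩ {y | Φ k B y < 1}).Nonempty → A = B :=
    fun k hk => (hΦ k hk).2
  -- Step 2: parents
  have hparex : ∀ (k : ℕ) (F : Set X), ∃ G : Set X, k < n → F ∈ 𝓕 (k+1) → G ∈ 𝓕 k ∧ F ⊆ G := by
    intro k F
    by_cases h : k < n ∧ F ∈ 𝓕 (k+1)
    · obtain ⟨G, hG, hFG⟩ := hC k h.1 F h.2
      exact ⟨G, fun _ _ => ⟨hG, hFG⟩⟩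
    · exact ⟨Set.univ, fun h1 h2 => absurd ⟨h1, h2⟩ h⟩
  choose par hpar using hparex
  have hparmem : ∀ k < n, ∀ F ∈ 𝓕 (k+1), par k F ∈ 𝓕 k := fun k hk F hF => (hpar k F hk hF).1
  have hparsub : ∀ k < n, ∀ F ∈ 𝓕 (k+1), F ⊆ par k F := fun k hk F hF => (hpar k F hk hF).2
  -- specialized ψ facts
  have ψcont := AppxPsi_cont (n:=n) (𝓕:=𝓕) (Φ:=Φ) (par:=par) hΦcont hparmem
  have ψ01 := AppxPsi_le_one (n:=n) (𝓕:=𝓕) (Φ:=Φ) (par:=par) hΦle hparmem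
  have ψ0 := AppxPsi_zero (n:=n) (𝓕:=𝓕) (Φ:=Φ) (par:=par) hΦzero hparmem hparsub
  have ψpos := AppxPsi_nonneg (Φ:=Φ) (par:=par)
  -- pointwise uniqueness of active sets
  have huniq : ∀ k ≤ n, ∀ (x : X), ∀ F ∈ 𝓕 k, ∀ G ∈ 𝓕 k,
      AppxPsi Φ par k F x < 1 → AppxPsi Φ par k G x < 1 → F = G := by
    intro k hk x F hF G hG hFx hGx
    match k with
    | 0 =>
      rw [hA] at hF hG
      simp only [Set.mem_singleton_iff] at hF hG
      rw [hF, hG]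
    | (k'+1) =>
      obtain ⟨U, _, hUx, hU⟩ := hΦU (k'+1) hk x
      exact hU F hF G hG ⟨x, hUx, lt_of_le_of_lt (AppxPsi_phi_le k' F x) hFx⟩
        ⟨x, hUx, lt_of_le_of_lt (AppxPsi_phi_le k' G x) hGx⟩
  have hact0 : ∀ x : X, ∃ F ∈ 𝓕 0, AppxPsi Φ par 0 F x < 1 := by
    intro x
    refine ⟨Set.univ, by rw [hA]; rfl, ?_⟩
    simp [AppxPsi]
  have hFbEq : ∀ k ≤ n, ∀ x : X, ∀ F ∈ 𝓕 k, AppxPsi Φ par k F x < 1 →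
      AppxFb 𝓕 (AppxPsi Φ par) k x = F := by
    intro k hk x F hF hFx
    have h : ∃ F ∈ 𝓕 k, AppxPsi Φ par k F x < 1 := ⟨F, hF, hFx⟩
    exact huniq k hk x _ (AppxFb_spec h).1 F hF (AppxFb_spec h).2 hFx
  have hactdown : ∀ k, k + 1 ≤ n → ∀ x : X,
      (∃ F ∈ 𝓕 (k+1), AppxPsi Φ par (k+1) F x < 1) →
      (∃ F ∈ 𝓕 k, AppxPsi Φ par k F x < 1) := by
    rintro k hk x ⟨F, hF, hFx⟩
    exact ⟨par k F, hparmem k (by omega) F hF,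
      lt_of_le_of_lt (AppxPsi_par_le k F x) hFx⟩
  have hstep : ∀ k, k + 1 ≤ n → ∀ x : X,
      ∀ _h : (∃ F ∈ 𝓕 (k+1), AppxPsi Φ par (k+1) F x < 1),
      AppxFb 𝓕 (AppxPsi Φ par) k x = par k (AppxFb 𝓕 (AppxPsi Φ par) (k+1) x) := by
    intro k hk x h
    have hF := (AppxFb_spec h).1
    have hFx := (AppxFb_spec h).2
    exact hFbEq k (by omega) x _ (hparmem k (by omega) _ hF)
      (lt_of_le_of_lt (AppxPsi_par_le k _ x) hFx)
  have hactchain : ∀ (d j : ℕ), j + d ≤ n → ∀ x : X,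
      (∃ F ∈ 𝓕 (j+d), AppxPsi Φ par (j+d) F x < 1) →
      (∃ F ∈ 𝓕 j, AppxPsi Φ par j F x < 1) := by
    intro d
    induction d with
    | zero => intro j _ x h; exact h
    | succ d ih =>
      intro j hj x h
      have : ∃ F ∈ 𝓕 (j+d), AppxPsi Φ par (j+d) F x < 1 := by
        apply hactdown (j+d) (by omega) x
        have e : j + (d+1) = (j+d)+1 := by omega
        rwa [e] at h
      exact ih j (by omega) x this
  have hdowncoh : ∀ (i j : ℕ), i ≤ j → j ≤ n → ∀ x : X,
      (∃ F ∈ 𝓕 j, AppxPsi Φ par j F x < 1) →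
      AppxDown par i j (AppxFb 𝓕 (AppxPsi Φ par) j x) = AppxFb 𝓕 (AppxPsi Φ par) (j-i) x := by
    intro i
    induction i with
    | zero => intro j _ _ x _; simp [AppxDown]
    | succ i ih =>
      intro j hij hjn x hax
      obtain ⟨j', rfl⟩ : ∃ j', j = j' + 1 := ⟨j - 1, by omega⟩
      have h1 : AppxDown par (i+1) (j'+1) (AppxFb 𝓕 (AppxPsi Φ par) (j'+1) x)
          = AppxDown par i j' (par j' (AppxFb 𝓕 (AppxPsi Φ par) (j'+1) x)) := by
        simp [AppxDown]
      rw [h1, ← hstep j' hjn x hax]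
      have hax' : ∃ F ∈ 𝓕 j', AppxPsi Φ par j' F x < 1 := hactdown j' hjn x hax
      rw [show (j'+1) - (i+1) = j' - i from by omega]
      exact ih j' (by omega) (by omega) x hax'
  -- ψb facts
  have hψble : ∀ k ≤ n, ∀ x : X, AppxPsib 𝓕 (AppxPsi Φ par) k x ≤ 1 := by
    intro k hk x
    by_cases h : ∃ F ∈ 𝓕 k, AppxPsi Φ par k F x < 1
    · rw [AppxPsib_pos h]; exact ψ01 k hk _ (AppxFb_spec h).1 x
    · rw [AppxPsib_neg h]
  have hψbpos : ∀ (k : ℕ) (x : X), 0 ≤ AppxPsib 𝓕 (AppxPsi Φ par) k x := by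
    intro k x
    by_cases h : ∃ F ∈ 𝓕 k, AppxPsi Φ par k F x < 1
    · rw [AppxPsib_pos h]; exact ψpos k _ x
    · rw [AppxPsib_neg h]; norm_num
  have hψbmono : ∀ k, k + 1 ≤ n → ∀ x : X,
      AppxPsib 𝓕 (AppxPsi Φ par) k x ≤ AppxPsib 𝓕 (AppxPsi Φ par) (k+1) x := by
    intro k hk x
    by_cases h : ∃ F ∈ 𝓕 (k+1), AppxPsi Φ par (k+1) F x < 1
    · rw [AppxPsib_pos h]
      have hF := (AppxFb_spec h).1
      have hlt := (AppxFb_spec h).2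
      have hax : ∃ G ∈ 𝓕 k, AppxPsi Φ par k G x < 1 :=
        ⟨par k _, hparmem k (by omega) _ hF, lt_of_le_of_lt (AppxPsi_par_le k _ x) hlt⟩
      rw [AppxPsib_pos hax, hstep k hk x h]
      exact AppxPsi_par_le k _ x
    · rw [AppxPsib_neg h]
      exact hψble k (by omega) x
  have hψbchain : ∀ (d j : ℕ), j + d ≤ n → ∀ x : X,
      AppxPsib 𝓕 (AppxPsi Φ par) j x ≤ AppxPsib 𝓕 (AppxPsi Φ par) (j+d) x := by
    intro d
    induction d with
    | zero => intro j _ x; exact le_rfl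
    | succ d ih =>
      intro j hj x
      have e : j + (d+1) = (j+d)+1 := by omega
      rw [e]
      exact le_trans (ih j (by omega) x) (hψbmono (j+d) (by omega) x)
  -- Step 3: construct the paths
  have hQex : ∀ (k : ℕ) (F : Set X), ∃ q : ℝ → Y,
      Continuous q ∧ (∀ s ≤ (0:ℝ), q s = p k F) ∧
      (1 ≤ k → k ≤ n → F ∈ 𝓕 k → q 1 = p (k-1) (par (k-1) F)) ∧
      (2 ≤ k → k ≤ n → F ∈ 𝓕 k → ∀ s : ℝ, dist (q s) (q 1) ≤ 1/2^(k+1)) := by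
    intro k F
    rcases k with _ | (_ | m)
    · exact ⟨fun _ => p 0 F, continuous_const, fun _ _ => rfl,
        fun h => absurd h (by omega), fun h => absurd h (by omega)⟩
    · by_cases hF : F ∈ 𝓕 1
      · have hpu : par 0 F = Set.univ := by
          have := hparmem 0 (by omega) F hF
          rw [hA] at this; simpa using this
        have γ : Path (p 1 F) (p 0 Set.univ) := (hD F hF).somePath.symm
        refine ⟨γ.extend, γ.continuous_extend, fun s hs => γ.extend_of_le_zero hs,
          fun _ _ _ => ?_, fun h => absurd h (by omega)⟩
        rw [γ.extend_one]
        show p 0 Set.univ = p 0 (par 0 F)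
        rw [hpu]
      · exact ⟨fun _ => p 1 F, continuous_const, fun _ _ => rfl,
          fun _ _ hF' => absurd hF' hF, fun _ _ hF' => absurd hF' hF⟩
    · by_cases hkF : m + 2 ≤ n ∧ F ∈ 𝓕 (m+2)
      · obtain ⟨hkn, hF⟩ := hkF
        have h1 : par (m+1) F ∈ 𝓕 (m+1) := hparmem (m+1) (by omega) F hF
        have h2 : F ⊆ par (m+1) F := hparsub (m+1) (by omega) F hF
        obtain ⟨γ, hγ⟩ := hE (m+1) (by omega) (by omega) F hF (par (m+1) F) h1 h2
        refine ⟨γ.extend, γ.continuous_extend, fun s hs => γ.extend_of_le_zero hs,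
          fun _ _ _ => by rw [γ.extend_one]; simp, ?_⟩
        intro _ _ _ s
        have hb : Bornology.IsBounded (Set.range ⇑γ) := (isCompact_range γ.continuous).isBounded
        have hm1 : γ.extend s ∈ Set.range ⇑γ := by rw [Path.extend]; exact ⟨_, rfl⟩
        have hm2 : γ.extend 1 ∈ Set.range ⇑γ := by rw [Path.extend]; exact ⟨_, rfl⟩
        have hle := Metric.dist_le_diam_of_mem hb hm1 hm2
        have : Metric.diam (Set.range ⇑γ) ≤ 1/2^(m+2+1) := le_of_lt hγ
        linarith
      · refine ⟨fun _ => p (m+2) F, continuous_const, fun _ _ => rfl, ?_, ?_⟩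
        · intro _ h2 h3; exact absurd ⟨h2, h3⟩ hkF
        · intro _ h2 h3; exact absurd ⟨h2, h3⟩ hkF
  choose Qf hQcont hQ0 hQ1 hQd using hQex
  have hQ1' : ∀ (k : ℕ), 1 ≤ k → k ≤ n → ∀ F ∈ 𝓕 k, Qf k F 1 = p (k-1) (par (k-1) F) :=
    fun k h1 h2 F hF => hQ1 k F h1 h2 hF
  have hQd' : ∀ (k : ℕ), 2 ≤ k → k ≤ n → ∀ F ∈ 𝓕 k, ∀ s : ℝ,
      dist (Qf k F s) (Qf k F 1) ≤ 1/2^(k+1) := fun k h1 h2 F hF s => hQd k F h1 h2 hF s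
  -- the map
  refine ⟨fun x => AppxVal (p 0 Set.univ) par Qf (AppxM 𝓕 (AppxPsi Φ par) n x)
    (AppxFb 𝓕 (AppxPsi Φ par) (AppxM 𝓕 (AppxPsi Φ par) n x) x)
    (∑ j ∈ Finset.range (AppxM 𝓕 (AppxPsi Φ par) n x + 1),
      AppxPsib 𝓕 (AppxPsi Φ par) j x), ?_, ?_⟩
  · -- continuity
    rw [continuous_iff_continuousAt]
    intro x₀
    have hUex : ∀ k : ℕ, ∃ U : Set X, IsOpen U ∧ x₀ ∈ U ∧ (k ≤ n →
        ∀ A ∈ 𝓕 k, ∀ B ∈ 𝓕 k, (U ∩ {y | Φ k A y < 1}).Nonempty →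
          (U ∩ {y | Φ k B y < 1}).Nonempty → A = B) := by
      intro k
      by_cases hk : k ≤ n
      · obtain ⟨U, h1, h2, h3⟩ := hΦU k hk x₀
        exact ⟨U, h1, h2, fun _ => h3⟩
      · exact ⟨Set.univ, isOpen_univ, trivial, fun h => absurd h hk⟩
    choose U hUo hUx hUd using hUex
    set U₀ : Set X := ⋂ k ∈ Finset.range (n+1), U k with hU₀def
    have hU₀o : IsOpen U₀ := isOpen_biInter_finset (fun k _ => hUo k)
    have hU₀x : x₀ ∈ U₀ := by
      rw [hU₀def]
      exact Set.mem_biInter fun k _ => hUx k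
    have hU₀sub : ∀ k ≤ n, U₀ ⊆ U k := by
      intro k hk
      rw [hU₀def]
      exact Set.biInter_subset_of_mem (Finset.mem_range.mpr (by omega))
    -- uniqueness on U₀
    have hUuniq : ∀ k ≤ n, ∀ F ∈ 𝓕 k, ∀ G ∈ 𝓕 k,
        (∃ y ∈ U₀, AppxPsi Φ par k F y < 1) → (∃ z ∈ U₀, AppxPsi Φ par k G z < 1) → F = G := by
      rintro k hk F hF G hG ⟨y, hyU, hy⟩ ⟨z, hzU, hz⟩
      match k with
      | 0 =>
        rw [hA] at hF hG
        simp only [Set.mem_singleton_iff] at hF hG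
        rw [hF, hG]
      | (k'+1) =>
        exact hUd (k'+1) hk F hF G hG
          ⟨y, hU₀sub _ hk hyU, lt_of_le_of_lt (AppxPsi_phi_le k' F y) hy⟩
          ⟨z, hU₀sub _ hk hzU, lt_of_le_of_lt (AppxPsi_phi_le k' G z) hz⟩
    obtain ⟨mU, hmUdef⟩ : ∃ mU, Nat.findGreatest
        (fun k => ∃ F ∈ 𝓕 k, ∃ y ∈ U₀, AppxPsi Φ par k F y < 1) n = mU := ⟨_, rfl⟩
    have hPc0 : ∃ F ∈ 𝓕 0, ∃ y ∈ U₀, AppxPsi Φ par 0 F y < 1 := by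
      refine ⟨Set.univ, by rw [hA]; rfl, x₀, hU₀x, ?_⟩
      simp [AppxPsi]
    have hmUle : mU ≤ n := hmUdef ▸ Nat.findGreatest_le n
    have hmUspec : ∃ F ∈ 𝓕 mU, ∃ y ∈ U₀, AppxPsi Φ par mU F y < 1 := by
      rw [← hmUdef]
      exact Nat.findGreatest_spec (P := fun k => ∃ F ∈ 𝓕 k, ∃ y ∈ U₀, AppxPsi Φ par k F y < 1)
        (Nat.zero_le n) hPc0
    obtain ⟨A, hAF, y₀, hy₀U, hy₀⟩ := hmUspec
    have hmUge : ∀ k ≤ n, (∃ F ∈ 𝓕 k, ∃ y ∈ U₀, AppxPsi Φ par k F y < 1) → k ≤ mU := by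
      intro k hk h
      rw [← hmUdef]
      exact Nat.le_findGreatest hk h
    have hAjmem : ∀ j ≤ mU, AppxDown par (mU - j) mU A ∈ 𝓕 j := by
      intro j hj
      have := AppxDown_mem (n:=n) hparmem (mU - j) mU (by omega) hmUle A hAF
      rwa [show mU - (mU - j) = j from by omega] at this
    have hAjy₀ : ∀ j ≤ mU, AppxPsi Φ par j (AppxDown par (mU - j) mU A) y₀ < 1 := by
      intro j hj
      have := AppxPsi_down_le (Φ:=Φ) (par:=par) (mU - j) mU (by omega) A y₀
      rw [show mU - (mU - j) = j from by omega] at this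
      exact lt_of_le_of_lt this hy₀
    have hFbU : ∀ x ∈ U₀, ∀ j ≤ n, ∀ _h : (∃ F ∈ 𝓕 j, AppxPsi Φ par j F x < 1),
        j ≤ mU ∧ AppxFb 𝓕 (AppxPsi Φ par) j x = AppxDown par (mU - j) mU A := by
      intro x hxU j hj h
      have hjmU : j ≤ mU := hmUge j hj ⟨_, (AppxFb_spec h).1, x, hxU, (AppxFb_spec h).2⟩
      exact ⟨hjmU, hUuniq j hj _ (AppxFb_spec h).1 _ (hAjmem j hjmU)
        ⟨x, hxU, (AppxFb_spec h).2⟩ ⟨y₀, hy₀U, hAjy₀ j hjmU⟩⟩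
    -- the local model
    have hTcont : Continuous (fun x =>
        ∑ j ∈ Finset.range (mU+1), AppxPsi Φ par j (AppxDown par (mU-j) mU A) x) := by
      apply continuous_finset_sum
      intro j hj
      have hjmU : j ≤ mU := by
        have := Finset.mem_range.mp hj; omega
      exact ψcont j (by omega) _ (hAjmem j hjmU)
    have hhcont : Continuous (fun x => AppxVal (p 0 Set.univ) par Qf mU A
        (∑ j ∈ Finset.range (mU+1), AppxPsi Φ par j (AppxDown par (mU-j) mU A) x)) :=
      (AppxVal_cont (n:=n) hA hQ0 hQcont hQ1' hparmem mU hmUle A hAF).comp hTcont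
    -- g agrees with the local model on U₀
    have hgh : ∀ x ∈ U₀, ∀ m, m ≤ n → (∃ F ∈ 𝓕 m, AppxPsi Φ par m F x < 1) →
        (∀ j ≤ n, (∃ F ∈ 𝓕 j, AppxPsi Φ par j F x < 1) → j ≤ m) →
        AppxVal (p 0 Set.univ) par Qf m
          (AppxFb 𝓕 (AppxPsi Φ par) m x)
          (∑ j ∈ Finset.range (m + 1),
            AppxPsib 𝓕 (AppxPsi Φ par) j x)
        = AppxVal (p 0 Set.univ) par Qf mU A
            (∑ j ∈ Finset.range (mU+1), AppxPsi Φ par j (AppxDown par (mU-j) mU A) x) := by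
      intro x hxU m hmn hmact hmmax
      obtain ⟨hmmU, hFbm⟩ := hFbU x hxU m hmn hmact
      have hterm1 : ∀ j ≤ m, AppxPsi Φ par j (AppxDown par (mU-j) mU A) x
          = AppxPsib 𝓕 (AppxPsi Φ par) j x := by
        intro j hj
        have hactj : ∃ F ∈ 𝓕 j, AppxPsi Φ par j F x < 1 := by
          apply hactchain (m - j) j (by omega) x
          rw [show j + (m-j) = m from by omega]
          exact hmact
        rw [AppxPsib_pos hactj, (hFbU x hxU j (by omega) hactj).2]
      have hterm2 : ∀ j, m < j → j ≤ mU →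
          AppxPsi Φ par j (AppxDown par (mU-j) mU A) x = 1 := by
        intro j hjm hjmU
        have hnact : ¬ ∃ F ∈ 𝓕 j, AppxPsi Φ par j F x < 1 := by
          intro h
          have : j ≤ m := hmmax j (by omega) h
          omega
        have h1 : ¬ AppxPsi Φ par j (AppxDown par (mU-j) mU A) x < 1 :=
          fun hlt => hnact ⟨_, hAjmem j hjmU, hlt⟩
        have h2 : AppxPsi Φ par j (AppxDown par (mU-j) mU A) x ≤ 1 :=
          ψ01 j (by omega) _ (hAjmem j hjmU) x
        linarith
      have hsum : (∑ j ∈ Finset.range (mU+1), AppxPsi Φ par j (AppxDown par (mU-j) mU A) x)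
          = (∑ j ∈ Finset.range (m+1), AppxPsib 𝓕 (AppxPsi Φ par) j x) + ((mU - m : ℕ) : ℝ) := by
        rw [Finset.range_eq_Ico,
          ← Finset.sum_Ico_consecutive _ (Nat.zero_le (m+1)) (by omega : m+1 ≤ mU+1)]
        congr 1
        · rw [← Finset.range_eq_Ico]
          refine Finset.sum_congr rfl ?_
          intro j hj
          exact hterm1 j (by have := Finset.mem_range.mp hj; omega)
        · have : ∀ j ∈ Finset.Ico (m+1) (mU+1),
              AppxPsi Φ par j (AppxDown par (mU-j) mU A) x = 1 := by
            intro j hj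
            have := Finset.mem_Ico.mp hj
            exact hterm2 j (by omega) (by omega)
          rw [Finset.sum_congr rfl this, Finset.sum_const, Nat.card_Ico]
          simp [show mU + 1 - (m+1) = mU - m from by omega]
      obtain ⟨i, rfl⟩ : ∃ i, mU = m + i := ⟨mU - m, by omega⟩
      have hSpos : 0 ≤ ∑ j ∈ Finset.range (m+1), AppxPsib 𝓕 (AppxPsi Φ par) j x :=
        Finset.sum_nonneg fun j _ => hψbpos j x
      have hiter := AppxVal_iter (n:=n) hA hQ0 hQ1' hparmem i m (by omega) A hAF
        (∑ j ∈ Finset.range (m+1), AppxPsib 𝓕 (AppxPsi Φ par) j x) hSpos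
      rw [hsum, show (m+i) - m = i from by omega]
      rw [show ((i:ℕ):ℝ) = ((i:ℕ):ℝ) from rfl] at hiter
      rw [hiter]
      congr 1
      rw [hFbm, show (m+i) - m = i from by omega]
    refine (hhcont.continuousAt).congr
      (Filter.eventuallyEq_of_mem (hU₀o.mem_nhds hU₀x) ?_).symm
    intro x hxU
    exact hgh x hxU (AppxM 𝓕 (AppxPsi Φ par) n x) AppxM_le (AppxM_spec (hact0 x))
      (fun j hj ha => AppxM_ge hj ha)
  · -- the estimate
    have key : ∀ (k : ℕ), 1 ≤ k → k ≤ n → ∀ (x : X) (G : Set X), G ∈ 𝓕 k → x ∈ G →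
        ∀ m, k ≤ m → m ≤ n → (∃ F ∈ 𝓕 m, AppxPsi Φ par m F x < 1) →
        dist (f x) (AppxVal (p 0 Set.univ) par Qf m (AppxFb 𝓕 (AppxPsi Φ par) m x)
          (∑ j ∈ Finset.range (m+1), AppxPsib 𝓕 (AppxPsi Φ par) j x)) < 1/2^k := by
      intro k hk1 hkn x G hG hxG m hkm hmn hmact
      have hψ0G : AppxPsi Φ par k G x = 0 := ψ0 k hkn G hG x hxG
      have hGlt : AppxPsi Φ par k G x < 1 := by rw [hψ0G]; norm_num
      have hactk : ∃ F ∈ 𝓕 k, AppxPsi Φ par k F x < 1 := ⟨G, hG, hGlt⟩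
      have hFbk : AppxFb 𝓕 (AppxPsi Φ par) k x = G := hFbEq k hkn x G hG hGlt
      have hψbk : AppxPsib 𝓕 (AppxPsi Φ par) k x = 0 := by
        rw [AppxPsib_pos hactk, hFbk, hψ0G]
      have hψbsmall : ∀ j ≤ k, AppxPsib 𝓕 (AppxPsi Φ par) j x = 0 := by
        intro j hj
        have hle := hψbchain (k - j) j (by omega) x
        rw [show j + (k-j) = k from by omega] at hle
        have := hψbpos j x
        linarith [hψbk]
      have hSpos : 0 ≤ ∑ j ∈ Finset.range (m+1), AppxPsib 𝓕 (AppxPsi Φ par) j x :=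
        Finset.sum_nonneg fun j _ => hψbpos j x
      have hSle : (∑ j ∈ Finset.range (m+1), AppxPsib 𝓕 (AppxPsi Φ par) j x)
          ≤ ((m - k : ℕ) : ℝ) := by
        rw [Finset.range_eq_Ico,
          ← Finset.sum_Ico_consecutive _ (Nat.zero_le (k+1)) (by omega : k+1 ≤ m+1)]
        have e1 : ∑ j ∈ Finset.Ico 0 (k+1), AppxPsib 𝓕 (AppxPsi Φ par) j x = 0 :=
          Finset.sum_eq_zero fun j hj =>
            hψbsmall j (by have := Finset.mem_Ico.mp hj; omega)
        rw [e1, zero_add]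
        calc ∑ j ∈ Finset.Ico (k+1) (m+1), AppxPsib 𝓕 (AppxPsi Φ par) j x
            ≤ ∑ j ∈ Finset.Ico (k+1) (m+1), 1 := by
              refine Finset.sum_le_sum ?_
              intro j hj
              have := Finset.mem_Ico.mp hj
              exact hψble j (by omega) x
          _ = ((m + 1 - (k+1) : ℕ) : ℝ) := by
              rw [Finset.sum_const, Nat.card_Ico]; simp
          _ = ((m - k : ℕ) : ℝ) := by congr 1; omega
      obtain ⟨i, rfl⟩ : ∃ i, m = k + i := ⟨m - k, by omega⟩
      have hSle' : (∑ j ∈ Finset.range (k+i+1), AppxPsib 𝓕 (AppxPsi Φ par) j x) ≤ (i : ℝ) := by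
        rw [show (k+i) - k = i from by omega] at hSle
        exact hSle
      have hFbmem : AppxFb 𝓕 (AppxPsi Φ par) (k+i) x ∈ 𝓕 (k+i) := (AppxFb_spec hmact).1
      have hdistv := AppxVal_dist (n:=n) hA hQ0 hQ1' hQd' hparmem i k hk1 (by omega)
        _ hFbmem _ hSle'
      have hdchain : AppxDown par i (k+i) (AppxFb 𝓕 (AppxPsi Φ par) (k+i) x) = G := by
        have := hdowncoh i (k+i) (by omega) (by omega) x hmact
        rw [show (k+i) - i = k from by omega] at this
        rw [this, hFbk]
      rw [hdchain] at hdistv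
      have hBx : dist (f x) (p k G) < 1 / 2^(k+2) := hB k hkn G hG x hxG
      have htri := dist_triangle (f x) (p k G)
        (AppxVal (p 0 Set.univ) par Qf (k+i)
          (AppxFb 𝓕 (AppxPsi Φ par) (k+i) x)
          (∑ j ∈ Finset.range (k+i+1), AppxPsib 𝓕 (AppxPsi Φ par) j x))
      rw [dist_comm] at hdistv
      have harith : (1:ℝ)/2^(k+2) + 1/2^(k+1) ≤ 1/2^k := by
        have e1 : (1:ℝ)/2^(k+2) = 1/2^k * (1/4) := by rw [pow_add]; norm_num; ring
        have e2 : (1:ℝ)/2^(k+1) = 1/2^k * (1/2) := by rw [pow_add]; norm_num; ring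
        have hp : (0:ℝ) ≤ 1/2^k := by positivity
        rw [e1, e2]
        nlinarith
      have hsmall : (0:ℝ) < 1/2^(k+i+1) := by positivity
      calc dist (f x) (AppxVal (p 0 Set.univ) par Qf (k+i)
            (AppxFb 𝓕 (AppxPsi Φ par) (k+i) x)
            (∑ j ∈ Finset.range (k+i+1), AppxPsib 𝓕 (AppxPsi Φ par) j x))
          ≤ dist (f x) (p k G) + dist (p k G)
              (AppxVal (p 0 Set.univ) par Qf (k+i)
                (AppxFb 𝓕 (AppxPsi Φ par) (k+i) x)
                (∑ j ∈ Finset.range (k+i+1), AppxPsib 𝓕 (AppxPsi Φ par) j x)) := htri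
        _ < 1/2^(k+2) + (1/2^(k+1) - 1/2^(k+i+1)) := by
            apply add_lt_add_of_lt_of_le hBx hdistv
        _ ≤ 1/2^k := by linarith
    intro k hk1 hkn x hx
    obtain ⟨G, hG, hxG⟩ := hx
    have hGlt : AppxPsi Φ par k G x < 1 := by
      rw [ψ0 k hkn G hG x hxG]; norm_num
    exact key k hk1 hkn x G hG hxG (AppxM 𝓕 (AppxPsi Φ par) n x)
      (AppxM_ge hkn ⟨G, hG, hGlt⟩) AppxM_le (AppxM_spec (hact0 x))
end
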